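/- arXiv:1412.2623 — 10 statements merged into one kernel-verified Lean document; each statement's English description precedes it below -/
import Mathlib

section
/- Let n ≥ 1, m ≥ 2, d ≥ 1, d_A ≥ 1. Let {ρ_{a|x}} be a non-steerable ensemble with witnessing family {ω_i} of positive semidefinite d×d matrices (so ρ_{a|x} = Σ_{i : i_x = a} ω_i for all a, x), and let {Z_i} be any family of d_A×d_A complex matrices, indexed by i ∈ {1,…,m}^n, satisfying the steering-map relations. Then Σ_i Z_i ⊗ ω^spec_i = Σ_i Z_i ⊗ ω_i (Kronecker products); in particular, if every Z_i is positive semidefinite, the matrix Σ_AB := Σ_i Z_i ⊗ ω^spec_i is a finite sum of Kronecker products of positive semidefinite matrices, i.e., it has a separable structure. -/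
open Matrix Finset
open scoped Kronecker ComplexOrder

/-- The outcome labeled `m` in 1-based labels: the last element of `Fin m`. -/
def lastIdx {m : ℕ} (hm : 0 < m) : Fin m := ⟨m - 1, by omega⟩

/-- The steering-map relations for a family of matrices indexed by multi-indices. -/
def SteeringRel {n m dA : ℕ} (Z : (Fin n → Fin m) → Matrix (Fin dA) (Fin dA) ℂ) : Prop :=
  ∀ i j : Fin n → Fin m,
    Z i = (∑ x : Fin n, Z (Function.update j x (i x))) - ((n : ℂ) - 1) • Z j

/-- The special solution `ω^spec` associated with an ensemble `ρ` together with a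
common marginal `ρbar`. -/
noncomputable def wspec {n m d : ℕ} (hm : 0 < m)
    (ρ : Fin n → Fin m → Matrix (Fin d) (Fin d) ℂ)
    (ρbar : Matrix (Fin d) (Fin d) ℂ) (i : Fin n → Fin m) :
    Matrix (Fin d) (Fin d) ℂ :=
  (if ∀ x, i x = lastIdx hm then
      (∑ x : Fin n, ρ x (lastIdx hm)) - ((n : ℂ) - 1) • ρbar
    else 0)
  + ∑ x : Fin n,
      if i x ≠ lastIdx hm ∧ ∀ y, y ≠ x → i y = lastIdx hm then ρ x (i x) else 0

section Aux
variable {I J K L : Type*}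

theorem sum_kron {α : Type*} (s : Finset α) (A : α → Matrix I J ℂ) (B : Matrix K L ℂ) :
    (∑ i ∈ s, A i) ⊗ₖ B = ∑ i ∈ s, A i ⊗ₖ B := by
  classical
  induction s using Finset.induction_on with
  | empty => simp
  | insert _ _ h ih => rw [Finset.sum_insert h, Finset.sum_insert h, Matrix.add_kronecker, ih]

theorem kron_sum {α : Type*} (s : Finset α) (A : Matrix I J ℂ) (B : α → Matrix K L ℂ) :
    A ⊗ₖ (∑ i ∈ s, B i) = ∑ i ∈ s, A ⊗ₖ B i := by
  classical
  induction s using Finset.induction_on with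
  | empty => simp
  | insert _ _ h ih => rw [Finset.sum_insert h, Finset.sum_insert h, Matrix.kronecker_add, ih]

theorem neg_kron (A : Matrix I J ℂ) (C : Matrix K L ℂ) : (-A) ⊗ₖ C = -(A ⊗ₖ C) := by
  rw [← neg_one_smul ℂ A, Matrix.smul_kronecker, neg_one_smul]

theorem kron_neg (A : Matrix I J ℂ) (C : Matrix K L ℂ) : A ⊗ₖ (-C) = -(A ⊗ₖ C) := by
  rw [← neg_one_smul ℂ C, Matrix.kronecker_smul, neg_one_smul]

theorem sub_kron (A B : Matrix I J ℂ) (C : Matrix K L ℂ) :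
    (A - B) ⊗ₖ C = A ⊗ₖ C - B ⊗ₖ C := by
  rw [sub_eq_add_neg, Matrix.add_kronecker, neg_kron, sub_eq_add_neg]

theorem kron_sub (A : Matrix I J ℂ) (B C : Matrix K L ℂ) :
    A ⊗ₖ (B - C) = A ⊗ₖ B - A ⊗ₖ C := by
  rw [sub_eq_add_neg, Matrix.kronecker_add, kron_neg, sub_eq_add_neg]

end Aux

theorem stmt0 (n m d dA : ℕ) (hn : 1 ≤ n) (hm : 2 ≤ m) (hd : 1 ≤ d) (hdA : 1 ≤ dA)
    (ρ : Fin n → Fin m → Matrix (Fin d) (Fin d) ℂ)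
    (hρ : ∀ x a, (ρ x a).PosSemidef)
    (ω : (Fin n → Fin m) → Matrix (Fin d) (Fin d) ℂ)
    (hω : ∀ i, (ω i).PosSemidef)
    (hsol : ∀ x a, ρ x a = ∑ i : Fin n → Fin m, if i x = a then ω i else 0)
    (ρbar : Matrix (Fin d) (Fin d) ℂ)
    (hρbar : ∀ x, ∑ a, ρ x a = ρbar)
    (Z : (Fin n → Fin m) → Matrix (Fin dA) (Fin dA) ℂ)
    (hZ : SteeringRel Z) :
    (∑ i : Fin n → Fin m, Z i ⊗ₖ wspec (by omega) ρ ρbar i)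
        = (∑ i : Fin n → Fin m, Z i ⊗ₖ ω i)
      ∧ ((∀ i, (Z i).PosSemidef) →
          ∃ (N : ℕ) (A : Fin N → Matrix (Fin dA) (Fin dA) ℂ)
            (B : Fin N → Matrix (Fin d) (Fin d) ℂ),
            (∀ r, (A r).PosSemidef) ∧ (∀ r, (B r).PosSemidef) ∧
            (∑ i : Fin n → Fin m, Z i ⊗ₖ wspec (by omega) ρ ρbar i)
              = ∑ r : Fin N, A r ⊗ₖ B r) := by
  classical
  have hm0 : 0 < m := by omega
  set lst : Fin m := lastIdx hm0 with hlst
  set l : Fin n → Fin m := fun _ => lst with hl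
  set e : Fin n → Fin m → (Fin n → Fin m) := fun x a => Function.update l x a with he
  have hexa : ∀ x a, e x a x = a := fun x a => Function.update_self x a l
  have hexy : ∀ x a y, y ≠ x → e x a y = lst := fun x a y hy => Function.update_of_ne hy a l
  have helast : ∀ x, e x lst = l := by
    intro x
    have : l x = lst := rfl
    rw [he]; simpa [this] using Function.update_eq_self x l
  -- Σ_i ω i = ρbar
  have hrhobar : ∑ i : Fin n → Fin m, ω i = ρbar := by
    have x0 : Fin n := ⟨0, hn⟩
    rw [← hρbar x0]
    rw [Finset.sum_congr rfl fun a _ => hsol x0 a, Finset.sum_comm]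
    refine Finset.sum_congr rfl fun i _ => ?_
    simp [Finset.sum_ite_eq]
  -- the common intermediate expression
  set T : Matrix (Fin dA × Fin d) (Fin dA × Fin d) ℂ :=
    (∑ x : Fin n, ∑ a : Fin m, Z (e x a) ⊗ₖ ρ x a) - ((n : ℂ) - 1) • (Z l ⊗ₖ ρbar) with hT
  -- LHS = T
  have hL : (∑ i : Fin n → Fin m, Z i ⊗ₖ wspec hm0 ρ ρbar i) = T := by
    unfold wspec
    rw [← hlst]
    have expand : ∀ i : Fin n → Fin m,
        Z i ⊗ₖ ((if ∀ x, i x = lst then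
              (∑ x : Fin n, ρ x lst) - ((n : ℂ) - 1) • ρbar else 0)
          + ∑ x : Fin n,
              if i x ≠ lst ∧ ∀ y, y ≠ x → i y = lst then ρ x (i x) else 0)
        = (if i = l then Z i ⊗ₖ ((∑ x : Fin n, ρ x lst) - ((n : ℂ) - 1) • ρbar) else 0)
          + ∑ x : Fin n,
              (if i x ≠ lst ∧ ∀ y, y ≠ x → i y = lst then Z i ⊗ₖ ρ x (i x) else 0) := by
      intro i
      rw [Matrix.kronecker_add, kron_sum]
      congr 1
      · have : (∀ x, i x = lst) ↔ i = l := by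
          constructor
          · intro h; funext y; exact h y
          · intro h y; rw [h]
        rw [if_congr this rfl rfl]
        split <;> simp
      · refine Finset.sum_congr rfl fun x _ => ?_
        split <;> simp
    rw [Finset.sum_congr rfl fun i _ => expand i, Finset.sum_add_distrib]
    have t1 : (∑ i : Fin n → Fin m,
        if i = l then Z i ⊗ₖ ((∑ x : Fin n, ρ x lst) - ((n : ℂ) - 1) • ρbar) else 0)
        = Z l ⊗ₖ ((∑ x : Fin n, ρ x lst) - ((n : ℂ) - 1) • ρbar) := by
      rw [Finset.sum_ite_eq' Finset.univ l
        (fun i => Z i ⊗ₖ ((∑ x : Fin n, ρ x lst) - ((n : ℂ) - 1) • ρbar))]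
      simp
    have t2 : (∑ i : Fin n → Fin m, ∑ x : Fin n,
        (if i x ≠ lst ∧ ∀ y, y ≠ x → i y = lst then Z i ⊗ₖ ρ x (i x) else 0))
        = ∑ x : Fin n, ∑ a : Fin m, (if a ≠ lst then Z (e x a) ⊗ₖ ρ x a else 0) := by
      rw [Finset.sum_comm]
      refine Finset.sum_congr rfl fun x _ => ?_
      rw [← Finset.sum_filter, ← Finset.sum_filter]
      refine Finset.sum_nbij' (fun i => i x) (fun a => e x a) ?_ ?_ ?_ ?_ ?_
      · intro i hi
        simp only [Finset.mem_filter, Finset.mem_univ, true_and] at hi ⊢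
        exact hi.1
      · intro a ha
        simp only [Finset.mem_filter, Finset.mem_univ, true_and] at ha ⊢
        exact ⟨by rw [hexa]; exact ha, fun y hy => hexy x a y hy⟩
      · intro i hi
        simp only [Finset.mem_filter, Finset.mem_univ, true_and] at hi
        funext y
        by_cases hy : y = x
        · subst hy; exact hexa y (i y)
        · exact (hexy x (i x) y hy).trans (hi.2 y hy).symm
      · intro a ha; exact hexa x a
      · intro i hi
        simp only [Finset.mem_filter, Finset.mem_univ, true_and] at hi
        have hfix : e x (i x) = i := by
          funext y
          by_cases hy : y = x
          · subst hy; exact hexa y (i y)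
          · exact (hexy x (i x) y hy).trans (hi.2 y hy).symm
        show Z i ⊗ₖ ρ x (i x) = Z (e x (i x)) ⊗ₖ ρ x (i x)
        rw [hfix]
    rw [t1, t2]
    have t3 : ∀ x : Fin n, (∑ a : Fin m, (if a ≠ lst then Z (e x a) ⊗ₖ ρ x a else 0))
        = (∑ a : Fin m, Z (e x a) ⊗ₖ ρ x a) - Z l ⊗ₖ ρ x lst := by
      intro x
      have := Finset.sum_eq_sum_sdiff_singleton_add (Finset.mem_univ lst)
        (fun a => Z (e x a) ⊗ₖ ρ x a)
      rw [eq_sub_iff_add_eq, ← helast x]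
      rw [this]
      congr 1
      rw [← Finset.sum_filter]
      refine Finset.sum_congr ?_ fun a _ => rfl
      ext a
      simp [Finset.mem_filter, Finset.mem_sdiff, and_comm]
    rw [Finset.sum_congr rfl fun x _ => t3 x, Finset.sum_sub_distrib, hT,
      kron_sub, Matrix.kronecker_smul, kron_sum]
    abel
  -- RHS = T
  have hR : (∑ i : Fin n → Fin m, Z i ⊗ₖ ω i) = T := by
    have expand : ∀ i : Fin n → Fin m, Z i ⊗ₖ ω i
        = (∑ x : Fin n, Z (e x (i x)) ⊗ₖ ω i) - ((n : ℂ) - 1) • (Z l ⊗ₖ ω i) := by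
      intro i
      conv_lhs => rw [hZ i l]
      rw [sub_kron, sum_kron, Matrix.smul_kronecker]
    rw [Finset.sum_congr rfl fun i _ => expand i, Finset.sum_sub_distrib,
      ← Finset.smul_sum, Finset.sum_comm, ← kron_sum, hrhobar, hT]
    congr 1
    refine Finset.sum_congr rfl fun x _ => ?_
    have step : ∀ i : Fin n → Fin m, Z (e x (i x)) ⊗ₖ ω i
        = ∑ a : Fin m, (if i x = a then Z (e x a) ⊗ₖ ω i else 0) := by
      intro i
      rw [Finset.sum_ite_eq Finset.univ (i x) (fun a => Z (e x a) ⊗ₖ ω i)]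
      simp
    rw [Finset.sum_congr rfl fun i _ => step i, Finset.sum_comm]
    refine Finset.sum_congr rfl fun a _ => ?_
    rw [hsol x a, kron_sum]
    refine Finset.sum_congr rfl fun i _ => ?_
    split <;> simp
  have main : (∑ i : Fin n → Fin m, Z i ⊗ₖ wspec hm0 ρ ρbar i)
      = (∑ i : Fin n → Fin m, Z i ⊗ₖ ω i) := hL.trans hR.symm
  refine ⟨main, fun hZpsd => ?_⟩
  obtain ⟨eq⟩ : Nonempty ((Fin n → Fin m) ≃ Fin (Fintype.card (Fin n → Fin m))) :=
    ⟨Fintype.equivFin _⟩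
  refine ⟨Fintype.card (Fin n → Fin m), fun r => Z (eq.symm r), fun r => ω (eq.symm r),
    fun r => hZpsd _, fun r => hω _, ?_⟩
  rw [main]
  exact (Equiv.sum_comp eq.symm fun i => Z i ⊗ₖ ω i).symm
end

section
/- Let n ≥ 2, m ≥ 2, d_A ≥ 1, d ≥ 1, and let {Z_i} be a family of Hermitian d_A×d_A complex matrices indexed by i ∈ {1,…,m}^n. Then the following are equivalent: (i) for every family {X_i} of Hermitian d×d matrices indexed by i ∈ {1,…,m}^n satisfying Σ_{i : i_x = a} X_i = 0 for all x ∈ {1,…,n} and a ∈ {1,…,m}, one has Σ_i Z_i ⊗ X_i = 0 (Kronecker products); (ii) {Z_i} satisfies the steering-map relations. In other words, the operator Σ_AB = Σ_i Z_i ⊗ ω_i is uniquely determined by the ensemble (independent of the choice of solution {ω_i}) if and only if the steering-map relations hold. -/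
open Matrix Finset
open scoped Kronecker ComplexOrder

private lemma mykron_sub {l m' p q : Type*} (A B : Matrix l m' ℂ) (C : Matrix p q ℂ) :
    (A - B) ⊗ₖ C = A ⊗ₖ C - B ⊗ₖ C := by
  ext ⟨r, s⟩ ⟨r', s'⟩
  simp [Matrix.kroneckerMap_apply, sub_mul]

private lemma mykron_sum_left {ι l m' p q : Type*} (s : Finset ι) (A : ι → Matrix l m' ℂ)
    (C : Matrix p q ℂ) : (∑ x ∈ s, A x) ⊗ₖ C = ∑ x ∈ s, A x ⊗ₖ C := by
  ext ⟨r, u⟩ ⟨r', u'⟩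
  simp [Matrix.kroneckerMap_apply, Matrix.sum_apply, Finset.sum_mul]

private lemma mykron_sum_right {ι l m' p q : Type*} (s : Finset ι) (A : Matrix l m' ℂ)
    (C : ι → Matrix p q ℂ) : A ⊗ₖ (∑ x ∈ s, C x) = ∑ x ∈ s, A ⊗ₖ C x := by
  ext ⟨r, u⟩ ⟨r', u'⟩
  simp [Matrix.kroneckerMap_apply, Matrix.sum_apply, Finset.mul_sum]

private lemma mykron_zero_right {l m' p q : Type*} (A : Matrix l m' ℂ) :
    A ⊗ₖ (0 : Matrix p q ℂ) = 0 := by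
  ext ⟨r, u⟩ ⟨r', u'⟩
  simp [Matrix.kroneckerMap_apply]

/-- a Hermitian family `Z` annihilates (under `Σ_i Z_i ⊗ X_i`) every
Hermitian solution `X` of the homogeneous local-hidden-state system if and only if
`Z` satisfies the steering-map relations; i.e., `Σ_AB` is uniquely determined by the
ensemble iff the steering-map relations hold. -/
theorem stmt2 (n m dA d : ℕ) (hn : 2 ≤ n) (hm : 2 ≤ m) (hdA : 1 ≤ dA) (hd : 1 ≤ d)
    (Z : (Fin n → Fin m) → Matrix (Fin dA) (Fin dA) ℂ)
    (hZherm : ∀ i, (Z i).IsHermitian) :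
    (∀ X : (Fin n → Fin m) → Matrix (Fin d) (Fin d) ℂ,
        (∀ i, (X i).IsHermitian) →
        (∀ (x : Fin n) (a : Fin m),
          (∑ i : Fin n → Fin m, if i x = a then X i else 0) = 0) →
        (∑ i : Fin n → Fin m, Z i ⊗ₖ X i) = 0)
      ↔ SteeringRel Z := by
  have hn1 : 0 < n := by omega
  have hm1 : 0 < m := by omega
  constructor
  · -- forward direction
    intro h i j
    set c : ℂ := (n : ℂ) - 1 with hc
    -- the coefficient family
    set t : (Fin n → Fin m) → ℂ := fun k =>
      (if k = i then 1 else 0)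
        - (∑ x : Fin n, if k = Function.update j x (i x) then 1 else 0)
        + c * (if k = j then 1 else 0) with ht
    have htreal : ∀ k, (starRingEnd ℂ) (t k) = t k := by
      intro k
      simp only [ht, map_add, map_sub, _root_.map_mul, map_sum, apply_ite (starRingEnd ℂ),
        _root_.map_one, _root_.map_zero, map_natCast, hc]
    -- the homogeneous Hermitian family
    set X : (Fin n → Fin m) → Matrix (Fin d) (Fin d) ℂ := fun k => t k • (1 : Matrix (Fin d) (Fin d) ℂ)
      with hX
    have hXherm : ∀ k, (X k).IsHermitian := by
      intro k
      simp only [hX, Matrix.IsHermitian, conjTranspose_smul, conjTranspose_one]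
      rw [Complex.star_def, htreal]
    -- key scalar identity: the coefficients are a homogeneous solution
    have hscal : ∀ (x' : Fin n) (a : Fin m), (∑ k : Fin n → Fin m, if k x' = a then t k else 0) = 0 := by
      intro x' a
      have split : ∀ k : Fin n → Fin m, (if k x' = a then t k else 0)
          = (if k x' = a then (if k = i then (1:ℂ) else 0) else 0)
            - (∑ x : Fin n, if k x' = a then (if k = Function.update j x (i x) then (1:ℂ) else 0) else 0)
            + c * (if k x' = a then (if k = j then (1:ℂ) else 0) else 0) := by
        intro k
        by_cases hk : k x' = a <;> simp [ht, hk]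
      rw [Finset.sum_congr rfl (fun k _ => split k)]
      rw [Finset.sum_add_distrib, Finset.sum_sub_distrib, ← Finset.mul_sum]
      have e1 : ∀ (v : Fin n → Fin m),
          (∑ k : Fin n → Fin m, if k x' = a then (if k = v then (1:ℂ) else 0) else 0)
            = if v x' = a then (1:ℂ) else 0 := by
        intro v
        have : ∀ k : Fin n → Fin m, (if k x' = a then (if k = v then (1:ℂ) else 0) else 0)
            = (if k = v then (if v x' = a then (1:ℂ) else 0) else 0) := by
          intro k
          by_cases hk : k = v
          · subst hk; simp
          · simp [hk]
        rw [Finset.sum_congr rfl (fun k _ => this k), Finset.sum_ite_eq']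
        simp
      rw [e1 i, e1 j]
      rw [Finset.sum_comm]
      rw [Finset.sum_congr rfl (fun x _ => e1 (Function.update j x (i x)))]
      have e2 : (∑ x : Fin n, if (Function.update j x (i x)) x' = a then (1:ℂ) else 0)
          = (if i x' = a then (1:ℂ) else 0) + c * (if j x' = a then (1:ℂ) else 0) := by
        have step : ∀ x : Fin n, (if (Function.update j x (i x)) x' = a then (1:ℂ) else 0)
            = (if x = x' then ((if i x' = a then (1:ℂ) else 0) - (if j x' = a then (1:ℂ) else 0)) else 0)
              + (if j x' = a then (1:ℂ) else 0) := by
          intro x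
          by_cases hx : x = x'
          · subst hx
            rw [Function.update_self]
            by_cases h1 : i x = a <;> by_cases h2 : j x = a <;> simp [h1, h2]
          · rw [Function.update_of_ne (by exact fun hh => hx hh.symm)]
            simp [hx]
        rw [Finset.sum_congr rfl (fun x _ => step x), Finset.sum_add_distrib,
          Finset.sum_ite_eq' Finset.univ x']
        simp only [Finset.mem_univ, if_true, Finset.sum_const, Finset.card_univ,
          Fintype.card_fin, nsmul_eq_mul, hc]
        ring
      rw [e2]
      ring
    have hhom : ∀ (x : Fin n) (a : Fin m),
        (∑ k : Fin n → Fin m, if k x = a then X k else 0) = 0 := by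
      intro x a
      have : ∀ k : Fin n → Fin m, (if k x = a then X k else 0)
          = (if k x = a then t k else 0) • (1 : Matrix (Fin d) (Fin d) ℂ) := by
        intro k
        by_cases hk : k x = a <;> simp [hX, hk]
      rw [Finset.sum_congr rfl (fun k _ => this k), ← Finset.sum_smul, hscal, zero_smul]
    have hzero := h X hXherm hhom
    -- extract the matrix identity entrywise
    have key : (∑ k : Fin n → Fin m, t k • Z k) = 0 := by
      ext r r'
      have s0 : Fin d := ⟨0, hd⟩
      have := congrFun (congrFun hzero (r, ⟨0, hd⟩)) (r', ⟨0, hd⟩)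
      simp only [Matrix.sum_apply, Matrix.zero_apply, Matrix.kroneckerMap_apply, hX,
        Matrix.smul_apply, Matrix.one_apply_eq, smul_eq_mul, mul_one] at this ⊢
      rw [← this]
      apply Finset.sum_congr rfl
      intro k _
      ring
    -- compute the weighted sum of Z
    have expand : (∑ k : Fin n → Fin m, t k • Z k)
        = Z i - (∑ x : Fin n, Z (Function.update j x (i x))) + c • Z j := by
      have : ∀ k : Fin n → Fin m, t k • Z k
          = (if k = i then Z k else 0)
            - (∑ x : Fin n, if k = Function.update j x (i x) then Z k else 0)
            + c • (if k = j then Z k else 0) := by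
        intro k
        simp only [ht, sub_smul, add_smul, Finset.sum_smul, mul_smul,
          ite_smul, one_smul, zero_smul, smul_ite, smul_zero]
      rw [Finset.sum_congr rfl (fun k _ => this k)]
      rw [Finset.sum_add_distrib, Finset.sum_sub_distrib, ← Finset.smul_sum]
      rw [Finset.sum_ite_eq' Finset.univ i Z, Finset.sum_ite_eq' Finset.univ j Z]
      rw [Finset.sum_comm]
      simp only [Finset.mem_univ, if_true]
      congr 1
      congr 1
      apply Finset.sum_congr rfl
      intro x _
      rw [Finset.sum_ite_eq' Finset.univ (Function.update j x (i x)) Z]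
      simp
    rw [expand] at key
    linear_combination (norm := module) key
  · -- reverse direction
    intro hS X hXherm hhom
    set j : Fin n → Fin m := fun _ => ⟨0, hm1⟩ with hj
    have hsum : (∑ k : Fin n → Fin m, X k) = 0 := by
      have x0 : Fin n := ⟨0, hn1⟩
      have := hhom ⟨0, hn1⟩
      calc (∑ k : Fin n → Fin m, X k)
          = ∑ a : Fin m, ∑ k : Fin n → Fin m, if k ⟨0, hn1⟩ = a then X k else 0 := by
            rw [Finset.sum_comm]
            apply Finset.sum_congr rfl
            intro k _
            rw [Finset.sum_ite_eq Finset.univ (k ⟨0, hn1⟩) (fun _ => X k)]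
            simp
        _ = 0 := by simp [this]
    calc (∑ k : Fin n → Fin m, Z k ⊗ₖ X k)
        = ∑ k : Fin n → Fin m,
            (((∑ x : Fin n, Z (Function.update j x (k x))) - ((n : ℂ) - 1) • Z j) ⊗ₖ X k) := by
          apply Finset.sum_congr rfl
          intro k _
          rw [← hS k j]
      _ = 0 := by
          simp only [mykron_sub, mykron_sum_left, Matrix.smul_kronecker]
          rw [Finset.sum_sub_distrib, ← Finset.smul_sum]
          have h2 : (∑ k : Fin n → Fin m, Z j ⊗ₖ X k) = 0 := by
            rw [← mykron_sum_right, hsum, mykron_zero_right]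
          rw [h2, smul_zero, sub_zero, Finset.sum_comm]
          apply Finset.sum_eq_zero
          intro x _
          have regroup : ∀ k : Fin n → Fin m,
              Z (Function.update j x (k x)) ⊗ₖ X k
                = ∑ a : Fin m, Z (Function.update j x a) ⊗ₖ (if k x = a then X k else 0) := by
            intro k
            have step : ∀ a : Fin m,
                Z (Function.update j x a) ⊗ₖ (if k x = a then X k else 0)
                  = if a = k x then Z (Function.update j x (k x)) ⊗ₖ X k else 0 := by
              intro a
              by_cases hk : k x = a
              · subst hk; simp
              · rw [if_neg hk, if_neg (fun h => hk h.symm), mykron_zero_right]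
            rw [Finset.sum_congr rfl (fun a _ => step a),
              Finset.sum_ite_eq' Finset.univ (k x)
                (fun _ => Z (Function.update j x (k x)) ⊗ₖ X k)]
            simp
          rw [Finset.sum_congr rfl (fun k _ => regroup k), Finset.sum_comm]
          apply Finset.sum_eq_zero
          intro a _
          rw [← mykron_sum_right, hhom x a, mykron_zero_right]
end

section
/- Let n ≥ 1, m ≥ 2, d ≥ 1, and let {ρ_{a|x}} be a family of d×d complex matrices (x ∈ {1,…,n}, a ∈ {1,…,m}) whose marginal ρ := Σ_{a=1}^m ρ_{a|x} is the same for every x. Then the special solution {ω^spec_i} satisfies the linear system ρ_{a|x} = Σ_{i : i_x = a} ω^spec_i for all a ∈ {1,…,m} and x ∈ {1,…,n}. -/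
open Matrix Finset
open scoped Kronecker

section aux

variable {n m d : ℕ}

lemma ite_add_zero' {α : Type*} [AddZeroClass α] (c : Prop) [Decidable c] (A B : α) :
    (if c then A + B else 0) = (if c then A else 0) + (if c then B else 0) := by
  split <;> simp

lemma ite_sum_zero {α β : Type*} [AddCommMonoid α] (c : Prop) [Decidable c]
    (s : Finset β) (f : β → α) :
    (if c then ∑ y ∈ s, f y else 0) = ∑ y ∈ s, if c then f y else 0 := by
  split <;> simp

lemma sum_first (L : Fin m) (C : Matrix (Fin d) (Fin d) ℂ) (x : Fin n) (a : Fin m) :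
    (∑ i : Fin n → Fin m, if i x = a then (if ∀ y, i y = L then C else 0) else 0)
    = if a = L then C else 0 := by
  have h0 : ∀ i : Fin n → Fin m,
      (if i x = a then (if ∀ y, i y = L then C else 0) else 0)
      = if i = Function.const (Fin n) L then (if a = L then C else 0) else 0 := by
    intro i
    by_cases h : i = Function.const (Fin n) L
    · subst h
      have hc : ∀ y, Function.const (Fin n) L y = L := fun _ => rfl
      by_cases hxa : Function.const (Fin n) L x = a
      · rw [if_pos hxa, if_pos hc, if_pos rfl,
          if_pos (show a = L from hxa.symm)]
      · rw [if_neg hxa, if_pos rfl,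
          if_neg (show ¬ a = L from fun h' => hxa h'.symm)]
    · have h2 : ¬ ∀ y, i y = L := fun hy => h (funext hy)
      rw [if_neg h, if_neg h2]
      simp
  rw [Finset.sum_congr rfl (fun i _ => h0 i),
    Finset.sum_ite_eq' Finset.univ (Function.const (Fin n) L)]
  simp

lemma key_inner (L : Fin m) (ρ : Fin n → Fin m → Matrix (Fin d) (Fin d) ℂ)
    (x y : Fin n) (a : Fin m) :
    (∑ i : Fin n → Fin m,
        if i x = a ∧ (i y ≠ L ∧ ∀ z, z ≠ y → i z = L)
        then ρ y (i y) else 0)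
    = ∑ b : Fin m,
        if ((if x = y then b else L) = a ∧ b ≠ L) then ρ y b else 0 := by
  set u : Fin m → (Fin n → Fin m) :=
    fun b => Function.update (Function.const (Fin n) L) y b with hu
  have hui : ∀ b₁ ∈ (univ : Finset (Fin m)), ∀ b₂ ∈ (univ : Finset (Fin m)),
      u b₁ = u b₂ → b₁ = b₂ := by
    intro b₁ _ b₂ _ h
    have := congrFun h y
    simpa [u] using this
  have h0 : ∀ i ∈ (univ : Finset (Fin n → Fin m)), i ∉ image u univ →
      (if i x = a ∧ (i y ≠ L ∧ ∀ z, z ≠ y → i z = L) then ρ y (i y) else 0) = 0 := by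
    intro i _ hi
    rw [if_neg]
    rintro ⟨-, -, hz⟩
    apply hi
    refine mem_image.2 ⟨i y, mem_univ _, ?_⟩
    funext z
    by_cases h : z = y
    · subst h; simp [u]
    · simp [u, Function.update_of_ne h, hz z h]
  rw [← Finset.sum_subset (Finset.subset_univ _) h0, Finset.sum_image hui]
  refine Finset.sum_congr rfl fun b _ => ?_
  have h1 : u b x = if x = y then b else L := by
    simp [u, Function.update_apply]
  have h2 : u b y = b := by simp [u]
  have h3 : (∀ z, z ≠ y → u b z = L) := by
    intro z hz; simp [u, Function.update_of_ne hz]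
  rw [h2]
  by_cases hc : (if x = y then b else L) = a ∧ b ≠ L
  · rw [if_pos, if_pos hc]
    exact ⟨h1 ▸ hc.1, h2 ▸ hc.2, h3⟩
  · rw [if_neg, if_neg hc]
    rintro ⟨hca, hcb, -⟩
    exact hc ⟨h1 ▸ hca, h2 ▸ hcb⟩

lemma sum_ne_last (L : Fin m) (f : Fin m → Matrix (Fin d) (Fin d) ℂ) :
    (∑ b : Fin m, if b ≠ L then f b else 0)
    = (∑ b : Fin m, f b) - f L := by
  have h : (∑ b : Fin m, f b)
      = (∑ b : Fin m, if b = L then f b else 0)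
        + ∑ b : Fin m, if b ≠ L then f b else 0 := by
    rw [← Finset.sum_add_distrib]
    refine Finset.sum_congr rfl fun b _ => ?_
    by_cases hb : b = L <;> simp [hb]
  rw [Finset.sum_ite_eq' Finset.univ L f] at h
  simp only [mem_univ, if_pos] at h
  rw [h]; abel

end aux

/-- the special solution `ω^spec` solves the linear system
`ρ_{a|x} = Σ_{i : i_x = a} ω^spec_i`. -/
theorem stmt3 (n m d : ℕ) (hn : 1 ≤ n) (hm : 2 ≤ m) (hd : 1 ≤ d)
    (ρ : Fin n → Fin m → Matrix (Fin d) (Fin d) ℂ)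
    (ρbar : Matrix (Fin d) (Fin d) ℂ)
    (hρbar : ∀ x, ∑ a, ρ x a = ρbar) :
    ∀ (x : Fin n) (a : Fin m),
      ρ x a = ∑ i : Fin n → Fin m,
        if i x = a then wspec (by omega) ρ ρbar i else 0 := by
  intro x a
  have hm0 : 0 < m := by omega
  simp only [wspec]
  set L : Fin m := lastIdx (by omega : 0 < m) with hLdef
  rw [Finset.sum_congr rfl (fun i _ => ite_add_zero' _ _ _), Finset.sum_add_distrib]
  rw [sum_first L]
  have hsecond :
      (∑ i : Fin n → Fin m,
        if i x = a then
          (∑ y : Fin n,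
            if i y ≠ L ∧ ∀ z, z ≠ y → i z = L then ρ y (i y) else 0)
        else 0)
      = ∑ y : Fin n, ∑ b : Fin m,
          if ((if x = y then b else L) = a ∧ b ≠ L) then ρ y b else 0 := by
    rw [Finset.sum_congr rfl (fun i _ => _root_.ite_sum_zero _ _ _), Finset.sum_comm]
    refine Finset.sum_congr rfl fun y _ => ?_
    rw [← key_inner L ρ x y a]
    refine Finset.sum_congr rfl fun i _ => ?_
    rw [← ite_and]
  rw [hsecond]
  by_cases ha : a = L
  · subst ha
    rw [if_pos rfl]
    have hinner : ∀ y : Fin n,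
        (∑ b : Fin m, if ((if x = y then b else L) = L ∧ b ≠ L) then ρ y b else 0)
        = if y = x then 0 else (ρbar - ρ y L) := by
      intro y
      by_cases hxy : x = y
      · subst hxy
        rw [if_pos rfl]
        refine Finset.sum_eq_zero fun b _ => ?_
        rw [if_neg]
        rintro ⟨h1, h2⟩
        rw [if_pos rfl] at h1
        exact h2 h1
      · rw [if_neg (fun h => hxy h.symm)]
        have hb : ∀ b : Fin m, (if ((if x = y then b else L) = L ∧ b ≠ L) then ρ y b else 0)
            = if b ≠ L then ρ y b else 0 := by
          intro b
          rw [if_neg hxy]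
          simp
        rw [Finset.sum_congr rfl (fun b _ => hb b), sum_ne_last L, hρbar y]
    rw [Finset.sum_congr rfl (fun y _ => hinner y)]
    have hsum : (∑ y : Fin n, if y = x then 0 else (ρbar - ρ y L))
        = (∑ y : Fin n, (ρbar - ρ y L)) - (ρbar - ρ x L) := by
      have h : (∑ y : Fin n, (ρbar - ρ y L))
          = (∑ y : Fin n, if y = x then (ρbar - ρ y L) else 0)
            + ∑ y : Fin n, (if y = x then 0 else (ρbar - ρ y L)) := by
        rw [← Finset.sum_add_distrib]
        refine Finset.sum_congr rfl fun y _ => ?_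
        by_cases h : y = x <;> simp [h]
      rw [Finset.sum_ite_eq' Finset.univ x (fun y => ρbar - ρ y L)] at h
      simp only [mem_univ, if_pos] at h
      rw [h]; abel
    rw [hsum, Finset.sum_sub_distrib, Finset.sum_const, Finset.card_univ,
      Fintype.card_fin]
    have hcast : (n : ℕ) • ρbar = ((n : ℂ)) • ρbar := (Nat.cast_smul_eq_nsmul ℂ n ρbar).symm
    have hsmul : ((n : ℂ) - 1) • ρbar = (n : ℂ) • ρbar - ρbar := by
      rw [sub_smul, one_smul]
    rw [hcast, hsmul]
    abel
  · rw [if_neg ha]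
    have hinner : ∀ y : Fin n,
        (∑ b : Fin m, if ((if x = y then b else L) = a ∧ b ≠ L) then ρ y b else 0)
        = if y = x then ρ x a else 0 := by
      intro y
      by_cases hxy : x = y
      · subst hxy
        rw [if_pos rfl]
        have hred : ∀ b : Fin m, (if x = x then b else L) = b := fun b => if_pos rfl
        have hb : ∀ b : Fin m, (if ((if x = x then b else L) = a ∧ b ≠ L) then ρ x b else 0)
            = if b = a then ρ x b else 0 := by
          intro b
          rw [hred b]
          by_cases h : b = a
          · subst h; simp [ha]
          · simp [h]
        rw [Finset.sum_congr rfl (fun b _ => hb b),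
          Finset.sum_ite_eq' Finset.univ a (ρ x)]
        simp
      · rw [if_neg (fun h => hxy h.symm)]
        refine Finset.sum_eq_zero fun b _ => ?_
        rw [if_neg]
        rintro ⟨h1, -⟩
        rw [if_neg hxy] at h1
        exact ha h1.symm
    rw [Finset.sum_congr rfl (fun y _ => hinner y),
      Finset.sum_ite_eq' Finset.univ x (fun _ => ρ x a)]
    simp
end

section
/- Let n ≥ 2 and m ≥ 2. For every multi-index k = (k_1,…,k_n) ∈ {1,…,m}^n having at least two components strictly less than m, the vector v^{(k)} satisfies Σ_{i : i_x = a} v^{(k)}_i = 0 for every x ∈ {1,…,n} and a ∈ {1,…,m}; that is, each v^{(k)} solves the homogeneous system associated with the local hidden state equations. -/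
open Matrix Finset

/-- The vector `v^(k)` with entries
`v^(k)_i = δ_{i,k} − Σ_x δ_{i,(m,…,m,k_x,m,…,m)} + (n−1)·δ_{i,(m,…,m)}`. -/
noncomputable def vvec {n m : ℕ} (hm : 0 < m) (k : Fin n → Fin m) :
    (Fin n → Fin m) → ℝ := fun i =>
  (if i = k then 1 else 0)
  - ∑ x : Fin n,
      (if i = Function.update (fun _ => lastIdx hm) x (k x) then 1 else 0)
  + ((n : ℝ) - 1) * (if i = (fun _ => lastIdx hm) then 1 else 0)

/-- for every multi-index `k` with at least two components strictly less
than `m`, the vector `v^(k)` solves the homogeneous system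
`Σ_{i : i_x = a} v^(k)_i = 0` for all settings `x` and outcomes `a`. -/
theorem stmt4 (n m : ℕ) (hn : 2 ≤ n) (hm : 2 ≤ m)
    (k : Fin n → Fin m)
    (hk : 2 ≤ (univ.filter fun x => k x < lastIdx (show 0 < m by omega)).card) :
    ∀ (x : Fin n) (a : Fin m),
      (∑ i : Fin n → Fin m,
        if i x = a then vvec (show 0 < m by omega) k i else 0) = 0 := by
  intro x a
  classical
  have hm0 : 0 < m := by omega
  have key : ∀ c : Fin n → Fin m,
      (∑ i : Fin n → Fin m, if i x = a ∧ i = c then (1:ℝ) else 0)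
        = if c x = a then 1 else 0 := by
    intro c
    have h1 : ∀ i : Fin n → Fin m,
        (if i x = a ∧ i = c then (1:ℝ) else 0)
          = if i = c then (if c x = a then (1:ℝ) else 0) else 0 := by
      intro i; by_cases h : i = c <;> simp [h]
    rw [Finset.sum_congr rfl fun i _ => h1 i, Finset.sum_ite_eq' univ c]
    simp
  have expand : ∀ i : Fin n → Fin m,
      (if i x = a then vvec hm0 k i else 0)
        = (if i x = a ∧ i = k then (1:ℝ) else 0)
          - (∑ y : Fin n, (if i x = a ∧ i = Function.update (fun _ => lastIdx hm0) y (k y)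
              then (1:ℝ) else 0))
          + ((n:ℝ) - 1) * (if i x = a ∧ i = (fun _ => lastIdx hm0) then (1:ℝ) else 0) := by
    intro i
    by_cases h : i x = a
    · simp [vvec, h]
    · simp [vvec, h]
  rw [Finset.sum_congr rfl fun i _ => expand i, Finset.sum_add_distrib,
    Finset.sum_sub_distrib, ← Finset.mul_sum, Finset.sum_comm, key k,
    key (fun _ => lastIdx hm0),
    Finset.sum_congr rfl fun y _ => key (Function.update (fun _ => lastIdx hm0) y (k y))]
  have hsum : (∑ y : Fin n,
      (if (Function.update (fun _ => lastIdx hm0) y (k y)) x = a then (1:ℝ) else 0))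
      = (if k x = a then 1 else 0) + ((n:ℝ) - 1) * (if lastIdx hm0 = a then 1 else 0) := by
    rw [← Finset.add_sum_erase _ _ (Finset.mem_univ x)]
    congr 1
    · simp
    · have hc : ∀ y ∈ Finset.univ.erase x,
          (if Function.update (fun _ => lastIdx hm0) y (k y) x = a then (1:ℝ) else 0)
            = if lastIdx hm0 = a then (1:ℝ) else 0 := by
        intro y hy
        rw [Function.update_apply, if_neg (fun h : x = y => (Finset.mem_erase.mp hy).1 h.symm)]
      rw [Finset.sum_congr rfl hc, Finset.sum_const,
        Finset.card_erase_of_mem (Finset.mem_univ x), Finset.card_univ, Fintype.card_fin,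
        nsmul_eq_mul, Nat.cast_sub (by omega : 1 ≤ n), Nat.cast_one]
  rw [hsum]
  ring
end

section
/- Let n ≥ 1, m ≥ 2, d ≥ 1. Let {ρ_{a|x}} be an ensemble of d×d matrices with common marginal ρ = Σ_a ρ_{a|x} for all x, let {ω_i} be a family of Hermitian d×d matrices with ρ_{a|x} = Σ_{i : i_x = a} ω_i for all a, x, and let {Z_i} be a family of Hermitian matrices satisfying the steering-map relations. Then for every fixed j = (j_1,…,j_n) ∈ {1,…,m}^n: Σ_i tr(Z_i · ω_i) = Σ_{x=1}^n Σ_{a=1}^m tr(Z_{(j_1,…,j_{x−1},a,j_{x+1},…,j_n)} · ρ_{a|x}) − (n−1)·tr(Z_{j_1…j_n} · ρ). In particular, the value Σ_i tr(Z_i · ω_i) depends only on the ensemble {ρ_{a|x}} and not on the particular solution {ω_i}. -/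
open Matrix Finset
open scoped ComplexOrder

lemma stmt7_key (n m d : ℕ) (hn : 1 ≤ n)
    (ρ : Fin n → Fin m → Matrix (Fin d) (Fin d) ℂ)
    (ρbar : Matrix (Fin d) (Fin d) ℂ)
    (hρbar : ∀ x, ∑ a, ρ x a = ρbar)
    (ω : (Fin n → Fin m) → Matrix (Fin d) (Fin d) ℂ)
    (hsol : ∀ x a, ρ x a = ∑ i : Fin n → Fin m, if i x = a then ω i else 0)
    (Z : (Fin n → Fin m) → Matrix (Fin d) (Fin d) ℂ)
    (hZ : SteeringRel Z) (j : Fin n → Fin m) :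
    ∑ i : Fin n → Fin m, (Z i * ω i).trace
      = (∑ x : Fin n, ∑ a : Fin m, (Z (Function.update j x a) * ρ x a).trace)
        - ((n : ℂ) - 1) * (Z j * ρbar).trace := by
  have x0 : Fin n := ⟨0, hn⟩
  have hsum : ∑ i : Fin n → Fin m, ω i = ρbar := by
    rw [← hρbar x0]
    rw [show (∑ a, ρ x0 a) = ∑ a : Fin m, ∑ i : Fin n → Fin m,
        if i x0 = a then ω i else 0 from by simp [hsol]]
    rw [Finset.sum_comm]
    simp
  have key : ∀ x : Fin n,
      ∑ a : Fin m, (Z (Function.update j x a) * ρ x a).trace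
        = ∑ i : Fin n → Fin m, (Z (Function.update j x (i x)) * ω i).trace := by
    intro x
    calc ∑ a : Fin m, (Z (Function.update j x a) * ρ x a).trace
        = ∑ a : Fin m, ∑ i : Fin n → Fin m,
            (if i x = a then (Z (Function.update j x a) * ω i).trace else 0) := by
          refine Finset.sum_congr rfl fun a _ => ?_
          rw [hsol, Matrix.mul_sum, trace_sum]
          refine Finset.sum_congr rfl fun i _ => ?_
          split <;> simp
      _ = ∑ i : Fin n → Fin m, ∑ a : Fin m,
            (if i x = a then (Z (Function.update j x a) * ω i).trace else 0) :=
          Finset.sum_comm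
      _ = ∑ i : Fin n → Fin m, (Z (Function.update j x (i x)) * ω i).trace := by
          refine Finset.sum_congr rfl fun i _ => ?_
          simp
  calc ∑ i : Fin n → Fin m, (Z i * ω i).trace
      = ∑ i : Fin n → Fin m,
          ((∑ x : Fin n, (Z (Function.update j x (i x)) * ω i).trace)
            - ((n : ℂ) - 1) * (Z j * ω i).trace) := by
        refine Finset.sum_congr rfl fun i _ => ?_
        rw [hZ i j, sub_mul, Matrix.sum_mul, trace_sub, trace_sum, smul_mul_assoc,
          trace_smul, smul_eq_mul]
    _ = (∑ x : Fin n, ∑ i : Fin n → Fin m, (Z (Function.update j x (i x)) * ω i).trace)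
          - ((n : ℂ) - 1) * ∑ i : Fin n → Fin m, (Z j * ω i).trace := by
        rw [Finset.sum_sub_distrib, Finset.sum_comm, Finset.mul_sum]
    _ = _ := by
        rw [show (∑ i : Fin n → Fin m, (Z j * ω i).trace) = (Z j * ρbar).trace from by
          rw [← hsum, Matrix.mul_sum, trace_sum]]
        refine congrArg (· - _) (Finset.sum_congr rfl fun x _ => (key x).symm)

/-- for any Hermitian solution `ω` of the local-hidden-state system and
any Hermitian family `Z` satisfying the steering-map relations, the value
`Σ_i tr(Z_i ω_i)` can be expressed, for every fixed `j`, directly in terms of the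
ensemble; in particular it does not depend on the chosen solution `ω`. -/
theorem stmt7 (n m d : ℕ) (hn : 1 ≤ n) (hm : 2 ≤ m) (hd : 1 ≤ d)
    (ρ : Fin n → Fin m → Matrix (Fin d) (Fin d) ℂ)
    (hρ : ∀ x a, (ρ x a).PosSemidef)
    (ρbar : Matrix (Fin d) (Fin d) ℂ)
    (hρbar : ∀ x, ∑ a, ρ x a = ρbar)
    (ω : (Fin n → Fin m) → Matrix (Fin d) (Fin d) ℂ)
    (hωherm : ∀ i, (ω i).IsHermitian)
    (hsol : ∀ x a, ρ x a = ∑ i : Fin n → Fin m, if i x = a then ω i else 0)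
    (Z : (Fin n → Fin m) → Matrix (Fin d) (Fin d) ℂ)
    (hZherm : ∀ i, (Z i).IsHermitian)
    (hZ : SteeringRel Z) :
    (∀ j : Fin n → Fin m,
      ∑ i : Fin n → Fin m, (Z i * ω i).trace
        = (∑ x : Fin n, ∑ a : Fin m, (Z (Function.update j x a) * ρ x a).trace)
          - ((n : ℂ) - 1) * (Z j * ρbar).trace)
    ∧ (∀ ω' : (Fin n → Fin m) → Matrix (Fin d) (Fin d) ℂ,
        (∀ i, (ω' i).IsHermitian) →
        (∀ x a, ρ x a = ∑ i : Fin n → Fin m, if i x = a then ω' i else 0) →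
        ∑ i : Fin n → Fin m, (Z i * ω i).trace
          = ∑ i : Fin n → Fin m, (Z i * ω' i).trace) := by
  refine ⟨fun j => stmt7_key n m d hn ρ ρbar hρbar ω hsol Z hZ j, fun ω' _ hsol' => ?_⟩
  have j0 : Fin n → Fin m := fun _ => ⟨0, by omega⟩
  rw [stmt7_key n m d hn ρ ρbar hρbar ω hsol Z hZ j0,
    stmt7_key n m d hn ρ ρbar hρbar ω' hsol' Z hZ j0]
end

section
/- Let n ≥ 1, m ≥ 2, n_B ≥ 1, d_A ≥ 1, d_B ≥ 1. Let {ω_i}, i ∈ {1,…,m}^n, be positive semidefinite d_B×d_B matrices, let {Z_i} be positive semidefinite d_A×d_A matrices, and assume the normalization Σ_i tr(Z_i)·tr(ω_i) = 1. For y = 1,…,n_B let M_{+|y}, M_{−|y} be positive semidefinite d_B×d_B matrices with M_{+|y} + M_{−|y} = I; set B_0 = I and B_y = M_{+|y} − M_{−|y}. Let G_0,…,G_{n_B} be Hermitian d_A×d_A matrices with tr(G_k·G_l) = δ_{kl}. Let D be the real (n_B+1)×(n_B+1) matrix with entries D_{ky} = Σ_i tr(G_k·Z_i)·tr(B_y·ω_i).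 Then |det D| ≤ (√d_B/(n_B+1))^{n_B+1}. -/
open Matrix Finset
open scoped ComplexOrder


noncomputable def cMinor {r : ℕ} {K : Type*} [Fintype K] [LinearOrder K]
    (A : Matrix (Fin r) K ℂ) (s : Finset K) : ℂ :=
  if h : s.card = r then (A.submatrix id (s.orderEmbOfFin h)).det else 0

theorem cauchyBinet {r : ℕ} {K : Type*} [Fintype K] [LinearOrder K]
    (A : Matrix (Fin r) K ℂ) (Bm : Matrix K (Fin r) ℂ) :
    (A * Bm).det = ∑ s : Finset K, cMinor A s * cMinor Bmᵀ s := by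
  classical
  have h1 : (A * Bm).det
      = ∑ f : Fin r → K, (∏ i, A i (f i)) * (Bm.submatrix f id).det := by
    have hrow : (A * Bm) = fun i => ∑ k : K, A i k • Bm k := by
      funext i j
      simp [Matrix.mul_apply, Finset.sum_apply, smul_eq_mul]
    rw [show (A * Bm).det = detRowAlternating (A * Bm) from rfl, hrow]
    rw [show (detRowAlternating (fun i => ∑ k : K, A i k • Bm k) : ℂ)
        = (detRowAlternating : (Fin r → ℂ) [⋀^Fin r]→ₗ[ℂ] ℂ).toMultilinearMap
            (fun i => ∑ k : K, A i k • Bm k) from rfl]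
    rw [MultilinearMap.map_sum]
    refine Finset.sum_congr rfl fun f _ => ?_
    rw [MultilinearMap.map_smul_univ]
    rfl
  rw [h1]
  rw [← Finset.sum_filter_add_sum_filter_not Finset.univ (fun f : Fin r → K => Function.Injective f)]
  have h2 : ∑ f ∈ Finset.univ.filter (fun f : Fin r → K => ¬ Function.Injective f),
      (∏ i, A i (f i)) * (Bm.submatrix f id).det = 0 := by
    refine Finset.sum_eq_zero fun f hf => ?_
    simp only [Finset.mem_filter, Function.Injective, not_forall] at hf
    obtain ⟨i, j, hij, hne⟩ := hf.2
    have : (Bm.submatrix f id).det = 0 :=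
      Matrix.det_zero_of_row_eq hne (by ext l; simp [Matrix.submatrix_apply, hij])
    rw [this, mul_zero]
  rw [h2, add_zero]
  -- fiberwise over images
  rw [← Finset.sum_fiberwise_of_maps_to
      (g := fun f : Fin r → K => Finset.univ.image f) (fun f _ => Finset.mem_univ _)]
  refine Finset.sum_congr rfl fun s _ => ?_
  by_cases h : s.card = r
  · -- bijection with permutations
    set e := s.orderEmbOfFin h with he
    have himg : Finset.univ.image (⇑e) = s := by
      apply Finset.eq_of_subset_of_card_le
      · intro x hx
        simp only [Finset.mem_image] at hx
        obtain ⟨i, _, rfl⟩ := hx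
        exact s.orderEmbOfFin_mem h i
      · rw [h, Finset.card_image_of_injective _ e.injective, Finset.card_univ, Fintype.card_fin]
    have key : ∑ σ : Equiv.Perm (Fin r), (∏ i, A i (e (σ i))) * (Bm.submatrix (⇑e ∘ ⇑σ) id).det
        = ∑ f ∈ (Finset.univ.filter (fun f : Fin r → K => Function.Injective f)).filter
          (fun f => Finset.univ.image f = s),
        (∏ i, A i (f i)) * (Bm.submatrix f id).det := by
      refine Finset.sum_nbij (fun σ => ⇑e ∘ ⇑σ) ?im ?inj ?surj ?val
      case im =>
        intro σ _
        simp only [Finset.mem_filter, Finset.mem_univ, true_and]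
        refine ⟨e.injective.comp σ.injective, ?_⟩
        rw [show Finset.univ.image (⇑e ∘ ⇑σ) = (Finset.univ.image ⇑σ).image ⇑e by
            rw [Finset.image_image]]
        rw [Finset.image_univ_equiv, himg]
      case inj =>
        intro σ _ τ _ hst
        exact Equiv.ext fun i => e.injective (congrFun hst i)
      case surj =>
        intro f hf
        simp only [Finset.coe_filter, Finset.mem_filter, Finset.mem_univ, true_and,
          Set.mem_setOf_eq] at hf
        have hmem : ∀ i, f i ∈ s := by
          intro i; rw [← hf.2]; exact Finset.mem_image_of_mem f (Finset.mem_univ i)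
        have hinj : Function.Injective (fun i => (s.orderIsoOfFin h).symm ⟨f i, hmem i⟩) := by
          intro a b hab
          apply hf.1
          have := congrArg (fun x => ((s.orderIsoOfFin h) x : K)) hab
          simpa using this
        refine ⟨Equiv.ofBijective _ (Finite.injective_iff_bijective.mp hinj), by simp, ?_⟩
        funext i
        simp only [Function.comp_apply, Equiv.ofBijective_apply]
        rw [he, ← Finset.coe_orderIsoOfFin_apply]
        simp
      case val => exact fun σ _ => rfl
    rw [← key]
    have hsub : ∀ σ : Equiv.Perm (Fin r),
        (Bm.submatrix (⇑e ∘ ⇑σ) id).det = (Equiv.Perm.sign σ : ℤ) * (Bm.submatrix (⇑e) id).det := by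
      intro σ
      rw [show Bm.submatrix (⇑e ∘ ⇑σ) id = (Bm.submatrix (⇑e) id).submatrix (⇑σ) id from rfl]
      rw [Matrix.det_permute]
    calc ∑ σ : Equiv.Perm (Fin r), (∏ i, A i (e (σ i))) * (Bm.submatrix (⇑e ∘ ⇑σ) id).det
        = (∑ σ : Equiv.Perm (Fin r), ((Equiv.Perm.sign σ : ℤ) : ℂ) * ∏ i, A i (e (σ i)))
            * (Bm.submatrix (⇑e) id).det := by
          rw [Finset.sum_mul]
          refine Finset.sum_congr rfl fun σ _ => ?_
          rw [hsub σ]; ring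
      _ = cMinor A s * cMinor Bmᵀ s := by
          have hA : (∑ σ : Equiv.Perm (Fin r), ((Equiv.Perm.sign σ : ℤ) : ℂ) * ∏ i, A i (e (σ i)))
              = (A.submatrix id ⇑e).det := by
            rw [← Matrix.det_transpose (A.submatrix id ⇑e), Matrix.det_apply']
            refine Finset.sum_congr rfl fun σ _ => ?_
            congr 1
          have hB : (Bm.submatrix (⇑e) id).det = (Bmᵀ.submatrix id ⇑e).det := by
            rw [← Matrix.det_transpose (Bmᵀ.submatrix id ⇑e), Matrix.transpose_submatrix,
              Matrix.transpose_transpose]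
          rw [hA, hB, cMinor, cMinor, dif_pos h, dif_pos h]
  · -- card mismatch: fiber empty and minors zero
    have : (Finset.univ.filter (fun f : Fin r → K => Function.Injective f)).filter
        (fun f => Finset.univ.image f = s) = ∅ := by
      rw [Finset.filter_eq_empty_iff]
      intro f hf
      simp only [Finset.mem_filter, Finset.mem_univ, true_and] at hf
      intro hs
      apply h
      rw [← hs, Finset.card_image_of_injective _ hf, Finset.card_univ, Fintype.card_fin]
    rw [this, Finset.sum_empty, cMinor, dif_neg h, zero_mul]

lemma cMinor_conj {r : ℕ} {K : Type*} [Fintype K] [LinearOrder K]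
    (X : Matrix (Fin r) K ℂ) (s : Finset K) :
    cMinor (Xᴴ)ᵀ s = star (cMinor X s) := by
  unfold cMinor
  by_cases h : s.card = r
  · rw [dif_pos h, dif_pos h]
    have heq : (Xᴴ)ᵀ.submatrix id ⇑(s.orderEmbOfFin h)
        = ((X.submatrix id ⇑(s.orderEmbOfFin h))ᵀ)ᴴ := by
      ext i j
      simp [Matrix.conjTranspose_apply, Matrix.submatrix_apply]
    rw [heq, Matrix.det_conjTranspose, Matrix.det_transpose]
  · rw [dif_neg h, dif_neg h, star_zero]

lemma det_self_mul_conjTranspose {r : ℕ} {K : Type*} [Fintype K] [LinearOrder K]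
    (X : Matrix (Fin r) K ℂ) :
    (X * Xᴴ).det = ((∑ s : Finset K, Complex.normSq (cMinor X s) : ℝ) : ℂ) := by
  rw [cauchyBinet]
  push_cast
  refine Finset.sum_congr rfl fun s _ => ?_
  rw [cMinor_conj, Complex.star_def, Complex.mul_conj]

theorem det_cauchy_schwarz {r : ℕ} {K : Type*} [Fintype K] [LinearOrder K]
    (X Y : Matrix (Fin r) K ℂ) :
    ‖(X * Yᴴ).det‖^2 ≤ (X * Xᴴ).det.re * (Y * Yᴴ).det.re := by
  have hX := det_self_mul_conjTranspose X
  have hY := det_self_mul_conjTranspose Y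
  have hXr : (X * Xᴴ).det.re = ∑ s : Finset K, Complex.normSq (cMinor X s) := by
    rw [hX, Complex.ofReal_re]
  have hYr : (Y * Yᴴ).det.re = ∑ s : Finset K, Complex.normSq (cMinor Y s) := by
    rw [hY, Complex.ofReal_re]
  rw [hXr, hYr, cauchyBinet]
  calc (‖∑ s : Finset K, cMinor X s * cMinor (Yᴴ)ᵀ s‖)^2
      ≤ (∑ s : Finset K, ‖cMinor X s‖ * ‖cMinor Y s‖)^2 := by
        apply pow_le_pow_left₀ (norm_nonneg _)
        refine le_trans (norm_sum_le _ _) ?_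
        refine Finset.sum_le_sum fun s _ => ?_
        rw [cMinor_conj, norm_mul, Complex.star_def, Complex.norm_conj]
    _ ≤ (∑ s : Finset K, (‖cMinor X s‖)^2)
          * (∑ s : Finset K, (‖cMinor Y s‖)^2) :=
        Finset.sum_mul_sq_le_sq_mul_sq _ _ _
    _ = _ := by
        congr 1 <;> exact Finset.sum_congr rfl fun s _ => Complex.sq_norm _

section EigenTools
open scoped ComplexOrder

lemma amgm_prod {r : ℕ} (hr : 0 < r) (f : Fin r → ℝ) (hf : ∀ i, 0 ≤ f i) :
    ∏ i, f i ≤ ((∑ i, f i) / r) ^ r := by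
  have hrR : (0:ℝ) < r := by exact_mod_cast hr
  have key := Real.geom_mean_le_arith_mean_weighted Finset.univ (fun _ => 1 / r) f
    (fun i _ => by positivity) (by simp [Finset.sum_const]; field_simp) (fun i _ => hf i)
  have hpow : ∀ i : Fin r, (f i ^ ((1:ℝ)/r)) ^ (r:ℕ) = f i := by
    intro i
    rw [← Real.rpow_natCast (f i ^ ((1:ℝ)/r)) r, ← Real.rpow_mul (hf i)]
    rw [show (1:ℝ)/r * r = 1 by field_simp, Real.rpow_one]
  calc ∏ i, f i = ∏ i, (f i ^ ((1:ℝ)/r)) ^ (r:ℕ) := by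
        refine Finset.prod_congr rfl fun i _ => (hpow i).symm
    _ = (∏ i, f i ^ ((1:ℝ)/r)) ^ (r:ℕ) := by rw [Finset.prod_pow]
    _ ≤ (∑ i, 1/(r:ℝ) * f i) ^ (r:ℕ) := by
        apply pow_le_pow_left₀ (Finset.prod_nonneg fun i _ => Real.rpow_nonneg (hf i) _) key
    _ = ((∑ i, f i) / r) ^ (r:ℕ) := by
        congr 1
        rw [← Finset.mul_sum]
        ring

variable {d : ℕ} {P : Matrix (Fin d) (Fin d) ℂ}

lemma trace_eq_sum_eig (hP : P.IsHermitian) :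
    P.trace = ((∑ i, hP.eigenvalues i : ℝ) : ℂ) := by
  have h1 : (star (hP.eigenvectorUnitary : Matrix (Fin d) (Fin d) ℂ))
      * (hP.eigenvectorUnitary : Matrix (Fin d) (Fin d) ℂ) = 1 :=
    Matrix.mem_unitaryGroup_iff'.mp hP.eigenvectorUnitary.2
  conv_lhs => rw [hP.spectral_theorem, Unitary.conjStarAlgAut_apply]
  rw [Matrix.trace_mul_cycle, h1, one_mul, Matrix.trace_diagonal]
  push_cast
  rfl

lemma trace_sq_eq_sum_eig_sq (hP : P.IsHermitian) :
    (P * P).trace = ((∑ i, (hP.eigenvalues i)^2 : ℝ) : ℂ) := by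
  have h1 : (star (hP.eigenvectorUnitary : Matrix (Fin d) (Fin d) ℂ))
      * (hP.eigenvectorUnitary : Matrix (Fin d) (Fin d) ℂ) = 1 :=
    Matrix.mem_unitaryGroup_iff'.mp hP.eigenvectorUnitary.2
  set U := (hP.eigenvectorUnitary : Matrix (Fin d) (Fin d) ℂ)
  set Dg : Matrix (Fin d) (Fin d) ℂ := Matrix.diagonal (RCLike.ofReal ∘ hP.eigenvalues) with hDg
  have h2 : P * P = U * (Dg * Dg) * star U := by
    conv_lhs => rw [hP.spectral_theorem, Unitary.conjStarAlgAut_apply]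
    calc (U * Dg * star U) * (U * Dg * star U)
        = U * Dg * ((star U * U) * (Dg * star U)) := by simp only [mul_assoc]
      _ = U * (Dg * Dg) * star U := by rw [h1, one_mul]; simp only [mul_assoc]
  rw [h2, Matrix.trace_mul_cycle, h1, one_mul, hDg,
    Matrix.diagonal_mul_diagonal, Matrix.trace_diagonal]
  push_cast
  refine Finset.sum_congr rfl fun i _ => ?_
  simp [pow_two]

lemma frobenius_eq_trace_sq (hP : P.IsHermitian) :
    ((∑ a, ∑ b, Complex.normSq (P a b) : ℝ) : ℂ) = (P * P).trace := by
  rw [Matrix.trace]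
  push_cast
  refine Finset.sum_congr rfl fun a _ => ?_
  rw [Matrix.diag_apply, Matrix.mul_apply]
  refine Finset.sum_congr rfl fun b _ => ?_
  have hba : P b a = (starRingEnd ℂ) (P a b) := by
    conv_lhs => rw [← hP]
    rw [Matrix.conjTranspose_apply]
    rfl
  rw [hba, Complex.mul_conj]

end EigenTools

section PSDTools
open scoped ComplexOrder
open scoped MatrixOrder
variable {d : ℕ} {P Q R : Matrix (Fin d) (Fin d) ℂ}

lemma psd_trace_re_nonneg (hP : P.PosSemidef) : 0 ≤ P.trace.re := by
  rw [trace_eq_sum_eig hP.1, Complex.ofReal_re]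
  exact Finset.sum_nonneg fun i _ => hP.eigenvalues_nonneg i

lemma psd_trace_eq (hP : P.PosSemidef) : P.trace = ((P.trace.re : ℝ) : ℂ) := by
  rw [trace_eq_sum_eig hP.1, Complex.ofReal_re]

lemma psd_frobenius_le (hP : P.PosSemidef) :
    ∑ a, ∑ b, Complex.normSq (P a b) ≤ (P.trace.re)^2 := by
  have h1 : ((∑ a, ∑ b, Complex.normSq (P a b) : ℝ) : ℂ) = (P * P).trace :=
    frobenius_eq_trace_sq hP.1
  have h2 : (∑ a, ∑ b, Complex.normSq (P a b) : ℝ) = ∑ i, (hP.1.eigenvalues i)^2 := by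
    have := h1.trans (trace_sq_eq_sum_eig_sq hP.1)
    exact_mod_cast this
  rw [h2, trace_eq_sum_eig hP.1, Complex.ofReal_re]
  exact Finset.sum_sq_le_sq_sum_of_nonneg fun i _ => hP.eigenvalues_nonneg i

lemma psd_trace_mul_nonneg (hQ : Q.PosSemidef) (hR : R.PosSemidef) :
    0 ≤ (Q * R).trace.re := by
  have h1 : Q * R = CFC.sqrt Q * (CFC.sqrt Q * R) := by
    rw [← mul_assoc, CFC.sqrt_mul_sqrt_self Q hQ.nonneg]
  rw [h1, Matrix.trace_mul_comm]
  have h2 : CFC.sqrt Q * R * CFC.sqrt Q = CFC.sqrt Q * R * (CFC.sqrt Q)ᴴ := by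
    rw [(CFC.sqrt_nonneg Q).posSemidef.1]
  rw [show (CFC.sqrt Q * R) * CFC.sqrt Q = CFC.sqrt Q * R * CFC.sqrt Q from rfl, h2]
  exact psd_trace_re_nonneg (hR.mul_mul_conjTranspose_same (CFC.sqrt Q))

lemma frob_dichotomic_le (hQ : Q.PosSemidef) (hR : R.PosSemidef) (hQR : Q + R = 1) :
    ∑ a, ∑ b, Complex.normSq ((Q - R) a b) ≤ (d : ℝ) := by
  have hB : (Q - R).IsHermitian := hQ.1.sub hR.1
  have hexp : (Q - R) * (Q - R)
      = (Q + R) * (Q + R) - (Q * R + Q * R) - (R * Q + R * Q) := by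
    noncomm_ring
  have h1 : ((∑ a, ∑ b, Complex.normSq ((Q - R) a b) : ℝ) : ℂ) = ((Q - R) * (Q - R)).trace :=
    frobenius_eq_trace_sq hB
  have h2 : (∑ a, ∑ b, Complex.normSq ((Q - R) a b) : ℝ)
      = (d : ℝ) - 2 * (Q * R).trace.re - 2 * (R * Q).trace.re := by
    have : (((Q - R)) * (Q - R)).trace.re
        = (d : ℝ) - 2 * (Q * R).trace.re - 2 * (R * Q).trace.re := by
      rw [hexp, hQR, one_mul, Matrix.trace_sub, Matrix.trace_sub, Matrix.trace_add,
        Matrix.trace_add, Matrix.trace_one]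
      simp [Complex.sub_re, Complex.add_re]
      ring
    rw [← this, ← h1, Complex.ofReal_re]
  rw [h2]
  have := psd_trace_mul_nonneg hQ hR
  have := psd_trace_mul_nonneg hR hQ
  linarith

end PSDTools

section Bessel

lemma bessel_trace_bound {dA r : ℕ} (G : Fin r → Matrix (Fin dA) (Fin dA) ℂ)
    (hGherm : ∀ k, (G k).IsHermitian)
    (hGortho : ∀ k l, (G k * G l).trace = if k = l then 1 else 0)
    (Zi : Matrix (Fin dA) (Fin dA) ℂ) :
    ∑ k, Complex.normSq ((G k * Zi).trace) ≤ ∑ a, ∑ b, Complex.normSq (Zi a b) := by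
  classical
  set v : Fin r → EuclideanSpace ℂ (Fin dA × Fin dA) :=
    fun k => (WithLp.equiv 2 _).symm (fun p : Fin dA × Fin dA => G k p.1 p.2) with hv
  set x : EuclideanSpace ℂ (Fin dA × Fin dA) :=
    (WithLp.equiv 2 _).symm (fun p : Fin dA × Fin dA => Zi p.1 p.2) with hx
  have hinner : ∀ (k : Fin r) (M : Matrix (Fin dA) (Fin dA) ℂ),
      (inner ℂ (v k) ((WithLp.equiv 2 _).symm (fun p : Fin dA × Fin dA => M p.1 p.2))
        : ℂ) = (G k * M).trace := by
    intro k M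
    rw [PiLp.inner_apply]
    simp only [RCLike.inner_apply', hv, WithLp.equiv_symm_apply, PiLp.toLp_apply]
    rw [Fintype.sum_prod_type]
    rw [Matrix.trace]
    rw [Finset.sum_comm]
    refine Finset.sum_congr rfl fun b _ => ?_
    rw [Matrix.diag_apply, Matrix.mul_apply]
    refine Finset.sum_congr rfl fun a _ => ?_
    congr 1
    · rw [show ((starRingEnd ℂ) (G k a b)) = (G k)ᴴ b a from rfl]
      rw [(hGherm k).eq]
  have honb : Orthonormal ℂ v := by
    rw [orthonormal_iff_ite]
    intro k l
    rw [hinner k (G l), hGortho k l]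
  have hb := Orthonormal.sum_inner_products_le (𝕜 := ℂ) (s := Finset.univ) x honb
  have hnx : ‖x‖^2 = ∑ a, ∑ b, Complex.normSq (Zi a b) := by
    rw [EuclideanSpace.norm_eq, Real.sq_sqrt (Finset.sum_nonneg fun p _ => sq_nonneg _)]
    rw [Fintype.sum_prod_type]
    refine Finset.sum_congr rfl fun a _ => Finset.sum_congr rfl fun b _ => ?_
    simp [hx, WithLp.equiv_symm_apply, Complex.sq_norm]
  rw [hnx] at hb
  refine le_trans (le_of_eq ?_) hb
  refine Finset.sum_congr rfl fun k _ => ?_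
  rw [hinner k Zi]
  simp [Complex.sq_norm]

end Bessel


section Nuclear
open scoped ComplexOrder

lemma sum_sqrt_eig_le {r : ℕ} {K I : Type*} [Fintype K] [Fintype I]
    (X : Matrix (Fin r) K ℂ) (g : I → Fin r → ℂ) (v : I → K → ℂ)
    (hX : ∀ k p, X k p = ∑ i, g i k * v i p)
    (h : (X * Xᴴ).IsHermitian) :
    ∑ k, Real.sqrt (h.eigenvalues k)
      ≤ ∑ i, Real.sqrt (∑ k, Complex.normSq (g i k))
          * Real.sqrt (∑ p, Complex.normSq (v i p)) := by
  classical
  have hP : (X * Xᴴ).PosSemidef := Matrix.posSemidef_self_mul_conjTranspose X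
  set lam : Fin r → ℝ := h.eigenvalues with hlam
  have hlam0 : ∀ k, 0 ≤ lam k := fun k => hP.eigenvalues_nonneg k
  set uf : Fin r → (Fin r → ℂ) := fun k => ⇑(h.eigenvectorBasis k) with huf
  have hu : ∀ k, (X * Xᴴ) *ᵥ uf k = lam k • uf k := fun k => h.mulVec_eigenvectorBasis k
  have huinner : ∀ k l, ∑ a, (starRingEnd ℂ) (uf k a) * uf l a = if k = l then 1 else 0 := by
    intro k l
    have h1 := h.eigenvectorBasis.orthonormal
    rw [orthonormal_iff_ite] at h1
    have h2 := h1 k l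
    rw [PiLp.inner_apply] at h2
    simp only [RCLike.inner_apply'] at h2
    simpa using h2
  set W : Fin r → (K → ℂ) := fun k => Xᴴ *ᵥ uf k with hW
  have hWW : ∀ k l, ∑ p, (starRingEnd ℂ) (W k p) * W l p
      = if k = l then ((lam l : ℝ) : ℂ) else 0 := by
    intro k l
    have e1 : ∑ p, (starRingEnd ℂ) (W k p) * W l p = dotProduct (star (W k)) (W l) := by
      simp [dotProduct, Pi.star_apply, Complex.star_def]
    rw [e1, hW]
    rw [Matrix.star_mulVec, Matrix.conjTranspose_conjTranspose]
    rw [← dotProduct_mulVec, Matrix.mulVec_mulVec, hu l]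
    have e2 : star (uf k) ⬝ᵥ (lam l • uf l) = ((lam l : ℝ) : ℂ) * (star (uf k) ⬝ᵥ uf l) := by
      simp [dotProduct, Finset.mul_sum, Complex.real_smul]
      exact Finset.sum_congr rfl fun a _ => by ring
    rw [e2]
    have e3 : star (uf k) ⬝ᵥ uf l = if k = l then 1 else 0 := by
      rw [← huinner k l]
      simp [dotProduct, Pi.star_apply, Complex.star_def]
    rw [e3]
    by_cases hkl : k = l <;> simp [hkl]
  set supp : Finset (Fin r) := Finset.univ.filter (fun k => lam k ≠ 0) with hsupp
  have hpos : ∀ k ∈ supp, 0 < lam k := by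
    intro k hk
    rw [hsupp, Finset.mem_filter] at hk
    exact lt_of_le_of_ne (hlam0 k) (Ne.symm hk.2)
  set wv : {k // k ∈ supp} → EuclideanSpace ℂ K :=
    fun k => (WithLp.equiv 2 _).symm
      (fun p => (((Real.sqrt (lam k.1))⁻¹ : ℝ) : ℂ) * W k.1 p) with hwv
  have hwv_apply : ∀ (k : {k // k ∈ supp}) (p : K),
      wv k p = (((Real.sqrt (lam k.1))⁻¹ : ℝ) : ℂ) * W k.1 p := fun k p => rfl
  have hwinner : ∀ (k l : {k // k ∈ supp}), (inner ℂ (wv k) (wv l) : ℂ)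
      = if k = l then 1 else 0 := by
    intro k l
    rw [PiLp.inner_apply]
    simp only [RCLike.inner_apply', hwv_apply]
    have e4 : ∀ p : K, (starRingEnd ℂ) ((((Real.sqrt (lam k.1))⁻¹ : ℝ) : ℂ) * W k.1 p)
        * ((((Real.sqrt (lam l.1))⁻¹ : ℝ) : ℂ) * W l.1 p)
        = ((((Real.sqrt (lam k.1))⁻¹ : ℝ) : ℂ) * (((Real.sqrt (lam l.1))⁻¹ : ℝ) : ℂ))
          * ((starRingEnd ℂ) (W k.1 p) * W l.1 p) := by
      intro p
      rw [RingHom.map_mul, Complex.conj_ofReal]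
      ring
    rw [Finset.sum_congr rfl fun p _ => e4 p, ← Finset.mul_sum, hWW]
    by_cases hkl : k = l
    · subst hkl
      rw [if_pos rfl, if_pos rfl]
      have hl := hpos k.1 k.2
      rw [← Complex.ofReal_mul, ← Complex.ofReal_mul]
      rw [show (Real.sqrt (lam k.1))⁻¹ * (Real.sqrt (lam k.1))⁻¹ * lam k.1 = 1 by
        rw [← Real.sqrt_mul_self (le_of_lt hl)]
        field_simp
        rw [Real.sq_sqrt (Real.sqrt_nonneg _)]]
      norm_num
    · have hkl' : ¬ (k.1 = l.1) := fun hh => hkl (Subtype.ext hh)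
      rw [if_neg hkl', if_neg hkl, mul_zero]
  have honw : Orthonormal ℂ wv := orthonormal_iff_ite.mpr hwinner
  -- the S-identity
  have hS : ∀ kk : {k // k ∈ supp},
      ∑ p, (starRingEnd ℂ) (wv kk p) * W kk.1 p = ((Real.sqrt (lam kk.1) : ℝ) : ℂ) := by
    intro kk
    have e5 : ∀ p, (starRingEnd ℂ) (wv kk p)
        = (((Real.sqrt (lam kk.1))⁻¹ : ℝ) : ℂ) * (starRingEnd ℂ) (W kk.1 p) := by
      intro p
      rw [hwv_apply, RingHom.map_mul, Complex.conj_ofReal]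
    calc ∑ p, (starRingEnd ℂ) (wv kk p) * W kk.1 p
        = (((Real.sqrt (lam kk.1))⁻¹ : ℝ) : ℂ)
            * ∑ p, (starRingEnd ℂ) (W kk.1 p) * W kk.1 p := by
          rw [Finset.mul_sum]
          exact Finset.sum_congr rfl fun p _ => by rw [e5 p]; ring
      _ = (((Real.sqrt (lam kk.1))⁻¹ : ℝ) : ℂ) * ((lam kk.1 : ℝ) : ℂ) := by
          rw [hWW kk.1 kk.1, if_pos rfl]
      _ = ((Real.sqrt (lam kk.1) : ℝ) : ℂ) := by
          rw [← Complex.ofReal_mul]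
          congr 1
          have hl := hpos kk.1 kk.2
          rw [show lam kk.1 = Real.sqrt (lam kk.1) * Real.sqrt (lam kk.1) from
            (Real.mul_self_sqrt (le_of_lt hl)).symm]
          field_simp
          rw [Real.sq_sqrt (sq_nonneg _)]
  -- swap identity
  have hswap : ∀ kk : {k // k ∈ supp},
      ∑ p, (starRingEnd ℂ) (wv kk p) * W kk.1 p
      = ∑ i, (∑ a, (starRingEnd ℂ) (g i a) * uf kk.1 a)
          * (∑ p, (starRingEnd ℂ) (wv kk p) * (starRingEnd ℂ) (v i p)) := by
    intro kk
    have expand : ∀ p, (starRingEnd ℂ) (wv kk p) * W kk.1 p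
        = ∑ a, ∑ i, ((starRingEnd ℂ) (g i a) * uf kk.1 a)
            * ((starRingEnd ℂ) (wv kk p) * (starRingEnd ℂ) (v i p)) := by
      intro p
      have hWp : W kk.1 p = ∑ a, (starRingEnd ℂ) (X a p) * uf kk.1 a := by
        rw [hW]
        simp [Matrix.mulVec, dotProduct, Matrix.conjTranspose_apply, Complex.star_def]
      rw [hWp, Finset.mul_sum]
      refine Finset.sum_congr rfl fun a _ => ?_
      rw [hX a p, map_sum (starRingEnd ℂ), Finset.sum_mul, Finset.mul_sum]
      refine Finset.sum_congr rfl fun i _ => ?_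
      rw [RingHom.map_mul]
      ring
    calc ∑ p, (starRingEnd ℂ) (wv kk p) * W kk.1 p
        = ∑ p, ∑ a, ∑ i, ((starRingEnd ℂ) (g i a) * uf kk.1 a)
            * ((starRingEnd ℂ) (wv kk p) * (starRingEnd ℂ) (v i p)) :=
          Finset.sum_congr rfl fun p _ => expand p
      _ = ∑ a, ∑ p, ∑ i, ((starRingEnd ℂ) (g i a) * uf kk.1 a)
            * ((starRingEnd ℂ) (wv kk p) * (starRingEnd ℂ) (v i p)) := Finset.sum_comm
      _ = ∑ a, ∑ i, ∑ p, ((starRingEnd ℂ) (g i a) * uf kk.1 a)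
            * ((starRingEnd ℂ) (wv kk p) * (starRingEnd ℂ) (v i p)) :=
          Finset.sum_congr rfl fun a _ => Finset.sum_comm
      _ = ∑ i, ∑ a, ∑ p, ((starRingEnd ℂ) (g i a) * uf kk.1 a)
            * ((starRingEnd ℂ) (wv kk p) * (starRingEnd ℂ) (v i p)) := Finset.sum_comm
      _ = ∑ i, (∑ a, (starRingEnd ℂ) (g i a) * uf kk.1 a)
          * (∑ p, (starRingEnd ℂ) (wv kk p) * (starRingEnd ℂ) (v i p)) := by
          refine Finset.sum_congr rfl fun i _ => ?_
          rw [Finset.sum_mul]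
          refine Finset.sum_congr rfl fun a _ => ?_
          rw [Finset.mul_sum]
  -- final estimates
  set A : I → {k // k ∈ supp} → ℝ :=
    fun i kk => ‖∑ a, (starRingEnd ℂ) (g i a) * uf kk.1 a‖ with hA
  set Bq : I → {k // k ∈ supp} → ℝ :=
    fun i kk => ‖∑ p, (starRingEnd ℂ) (wv kk p) * (starRingEnd ℂ) (v i p)‖ with hB
  have habs : ∀ kk : {k // k ∈ supp},
      Real.sqrt (lam kk.1) ≤ ∑ i, A i kk * Bq i kk := by
    intro kk
    have e := (hS kk).symm.trans (hswap kk)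
    have e2 : Real.sqrt (lam kk.1) = ‖((Real.sqrt (lam kk.1) : ℝ) : ℂ)‖ := by
      rw [Complex.norm_real, Real.norm_eq_abs, abs_of_nonneg (Real.sqrt_nonneg _)]
    rw [e2, e]
    refine le_trans (norm_sum_le _ _) ?_
    exact le_of_eq (Finset.sum_congr rfl fun i _ => norm_mul _ _)
  set gvec : I → EuclideanSpace ℂ (Fin r) := fun i => (WithLp.equiv 2 _).symm (g i) with hgvec
  set vconj : I → EuclideanSpace ℂ K :=
    fun i => (WithLp.equiv 2 _).symm (fun p => (starRingEnd ℂ) (v i p)) with hvconj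
  have hA2 : ∀ i, ∑ kk : {k // k ∈ supp}, (A i kk)^2 ≤ ∑ a, Complex.normSq (g i a) := by
    intro i
    have hAinner : ∀ kk : {k // k ∈ supp},
        A i kk = ‖(inner ℂ (h.eigenvectorBasis kk.1) (gvec i) : ℂ)‖ := by
      intro kk
      rw [hA, PiLp.inner_apply]
      simp only [RCLike.inner_apply', hgvec, WithLp.equiv_symm_apply, PiLp.toLp_apply]
      rw [show (∑ a, (starRingEnd ℂ) ((h.eigenvectorBasis kk.1) a) * g i a)
          = (starRingEnd ℂ) (∑ a, (starRingEnd ℂ) (g i a) * uf kk.1 a) by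
        rw [map_sum (starRingEnd ℂ)]
        refine Finset.sum_congr rfl fun a _ => ?_
        rw [RingHom.map_mul, Complex.conj_conj]
        exact mul_comm _ _]
      rw [Complex.norm_conj]
    have hbes := Orthonormal.sum_inner_products_le (𝕜 := ℂ) (s := supp) (gvec i)
      h.eigenvectorBasis.orthonormal
    have hcoe : ∑ kk : {k // k ∈ supp}, (A i kk)^2
        = ∑ k ∈ supp, ‖(inner ℂ (h.eigenvectorBasis k) (gvec i) : ℂ)‖^2 := by
      rw [← Finset.sum_coe_sort supp (fun k => ‖(inner ℂ (h.eigenvectorBasis k) (gvec i) : ℂ)‖^2)]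
      exact Finset.sum_congr rfl fun kk _ => by rw [hAinner kk]
    rw [hcoe]
    refine le_trans hbes (le_of_eq ?_)
    rw [EuclideanSpace.norm_eq, Real.sq_sqrt (Finset.sum_nonneg fun a _ => sq_nonneg _)]
    refine Finset.sum_congr rfl fun a _ => ?_
    simp [hgvec, WithLp.equiv_symm_apply, Complex.sq_norm]
  have hB2 : ∀ i, ∑ kk : {k // k ∈ supp}, (Bq i kk)^2 ≤ ∑ p, Complex.normSq (v i p) := by
    intro i
    have hBinner : ∀ kk : {k // k ∈ supp},
        Bq i kk = ‖(inner ℂ (wv kk) (vconj i) : ℂ)‖ := by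
      intro kk
      rw [hB, PiLp.inner_apply]
      simp only [RCLike.inner_apply', hvconj, WithLp.equiv_symm_apply, PiLp.toLp_apply]
    have hbes := Orthonormal.sum_inner_products_le (𝕜 := ℂ) (s := Finset.univ) (vconj i) honw
    refine le_trans (le_of_eq (Finset.sum_congr rfl fun kk _ => by rw [hBinner kk])) ?_
    refine le_trans hbes (le_of_eq ?_)
    rw [EuclideanSpace.norm_eq, Real.sq_sqrt (Finset.sum_nonneg fun p _ => sq_nonneg _)]
    refine Finset.sum_congr rfl fun p _ => ?_
    simp [hvconj, WithLp.equiv_symm_apply, Complex.sq_norm, Complex.normSq_conj]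
  have hsum0 : ∑ k, Real.sqrt (lam k) = ∑ k ∈ supp, Real.sqrt (lam k) := by
    refine (Finset.sum_subset (Finset.filter_subset _ _) ?_).symm
    intro k _ hk
    rw [Finset.mem_filter] at hk
    push_neg at hk
    rw [hk (Finset.mem_univ k), Real.sqrt_zero]
  calc ∑ k, Real.sqrt (lam k)
      = ∑ kk : {k // k ∈ supp}, Real.sqrt (lam kk.1) := by
        rw [hsum0, ← Finset.sum_coe_sort supp (fun k => Real.sqrt (lam k))]
    _ ≤ ∑ kk : {k // k ∈ supp}, ∑ i, A i kk * Bq i kk :=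
        Finset.sum_le_sum fun kk _ => habs kk
    _ = ∑ i, ∑ kk : {k // k ∈ supp}, A i kk * Bq i kk := Finset.sum_comm
    _ ≤ ∑ i, Real.sqrt (∑ k, Complex.normSq (g i k)) * Real.sqrt (∑ p, Complex.normSq (v i p)) := by
        refine Finset.sum_le_sum fun i _ => ?_
        have hcs := Finset.sum_mul_sq_le_sq_mul_sq Finset.univ (A i) (Bq i)
        have h1 : ∑ kk : {k // k ∈ supp}, A i kk * Bq i kk
            ≤ Real.sqrt ((∑ kk : {k // k ∈ supp}, (A i kk)^2)
                * (∑ kk : {k // k ∈ supp}, (Bq i kk)^2)) := by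
          rw [show (∑ kk : {k // k ∈ supp}, A i kk * Bq i kk)
              = Real.sqrt ((∑ kk : {k // k ∈ supp}, A i kk * Bq i kk)^2) from
            (Real.sqrt_sq (Finset.sum_nonneg fun kk _ =>
              mul_nonneg (norm_nonneg _) (norm_nonneg _))).symm]
          exact Real.sqrt_le_sqrt hcs
        refine le_trans h1 ?_
        rw [Real.sqrt_mul (Finset.sum_nonneg fun kk _ => sq_nonneg _)]
        exact mul_le_mul (Real.sqrt_le_sqrt (hA2 i)) (Real.sqrt_le_sqrt (hB2 i))
          (Real.sqrt_nonneg _) (Real.sqrt_nonneg _)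

end Nuclear

section DetRe
open scoped ComplexOrder
lemma herm_det_re_eq {r : ℕ} {P : Matrix (Fin r) (Fin r) ℂ} (hP : P.IsHermitian) :
    P.det.re = ∏ k, hP.eigenvalues k := by
  rw [hP.det_eq_prod_eigenvalues]
  norm_cast
end DetRe


/-- determinant bound for the data matrix of a `d_B`-dimension-bounded
steering scenario with `n_B` dichotomic measurements on the characterized side:
non-steerable (normalized) data satisfy `|det D| ≤ (√d_B/(n_B+1))^{n_B+1}`. -/
theorem stmt9 (n m nB dA dB : ℕ) (hn : 1 ≤ n) (hm : 2 ≤ m) (hnB : 1 ≤ nB)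
    (hdA : 1 ≤ dA) (hdB : 1 ≤ dB)
    (ω : (Fin n → Fin m) → Matrix (Fin dB) (Fin dB) ℂ)
    (hω : ∀ i, (ω i).PosSemidef)
    (Z : (Fin n → Fin m) → Matrix (Fin dA) (Fin dA) ℂ)
    (hZ : ∀ i, (Z i).PosSemidef)
    (hnorm : ∑ i : Fin n → Fin m, (Z i).trace * (ω i).trace = 1)
    (Mp Mm : Fin nB → Matrix (Fin dB) (Fin dB) ℂ)
    (hMp : ∀ y, (Mp y).PosSemidef) (hMm : ∀ y, (Mm y).PosSemidef)
    (hPOVM : ∀ y, Mp y + Mm y = 1)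
    (B : Fin (nB + 1) → Matrix (Fin dB) (Fin dB) ℂ)
    (hB0 : B 0 = 1)
    (hBy : ∀ y : Fin nB, B y.succ = Mp y - Mm y)
    (G : Fin (nB + 1) → Matrix (Fin dA) (Fin dA) ℂ)
    (hGherm : ∀ k, (G k).IsHermitian)
    (hGortho : ∀ k l, (G k * G l).trace = if k = l then 1 else 0)
    (D : Matrix (Fin (nB + 1)) (Fin (nB + 1)) ℝ)
    (hD : ∀ k y, (D k y : ℂ)
      = ∑ i : Fin n → Fin m, (G k * Z i).trace * (B y * ω i).trace) :
    |D.det| ≤ (Real.sqrt dB / (nB + 1)) ^ (nB + 1) := by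
  classical
  have hdB0 : 0 < dB := hdB
  letI : LinearOrder (Fin dB × Fin dB) :=
    LinearOrder.lift' (fun p : Fin dB × Fin dB => dB * (p.1 : ℕ) + (p.2 : ℕ)) (by
      intro p q hpq
      simp only at hpq
      have h1 : (p.1 : ℕ) = q.1 := by
        have e1 := congrArg (· / dB) hpq
        simpa [Nat.mul_add_div hdB0, Nat.div_eq_of_lt p.2.isLt,
          Nat.div_eq_of_lt q.2.isLt] using e1
      have h2 : (p.2 : ℕ) = q.2 := by
        rw [h1] at hpq; omega
      exact Prod.ext (Fin.ext h1) (Fin.ext h2))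
  have hBherm : ∀ y, (B y).IsHermitian := by
    intro y
    refine Fin.cases ?_ ?_ y
    · rw [hB0]; exact Matrix.isHermitian_one
    · intro z; rw [hBy z]; exact ((hMp z).1.sub (hMm z).1)
  set X : Matrix (Fin (nB+1)) (Fin dB × Fin dB) ℂ :=
    fun k p => ∑ i, (G k * Z i).trace * ω i p.1 p.2 with hXdef
  set Y : Matrix (Fin (nB+1)) (Fin dB × Fin dB) ℂ := fun y p => B y p.1 p.2 with hYdef
  have etr : ∀ (Mo MB : Matrix (Fin dB) (Fin dB) ℂ),
      ∑ p : Fin dB × Fin dB, Mo p.1 p.2 * MB p.2 p.1 = (MB * Mo).trace := by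
    intro Mo MB
    rw [Fintype.sum_prod_type, Matrix.trace, Finset.sum_comm]
    refine Finset.sum_congr rfl fun b _ => ?_
    rw [Matrix.diag_apply, Matrix.mul_apply]
    exact Finset.sum_congr rfl fun a _ => mul_comm _ _
  have hXY : ∀ k y, (X * Yᴴ) k y = ((D k y : ℝ) : ℂ) := by
    intro k y
    rw [Matrix.mul_apply, hD k y]
    calc ∑ p : Fin dB × Fin dB, X k p * Yᴴ p y
        = ∑ p : Fin dB × Fin dB, ∑ i, (G k * Z i).trace * (ω i p.1 p.2 * B y p.2 p.1) := by
          refine Finset.sum_congr rfl fun p _ => ?_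
          have hc : Yᴴ p y = B y p.2 p.1 := by
            rw [Matrix.conjTranspose_apply]
            show star (B y p.1 p.2) = B y p.2 p.1
            rw [Complex.star_def,
              show (starRingEnd ℂ) (B y p.1 p.2) = (B y)ᴴ p.2 p.1 from rfl, (hBherm y).eq]
          rw [hc]
          show (∑ i, (G k * Z i).trace * ω i p.1 p.2) * B y p.2 p.1 = _
          rw [Finset.sum_mul]
          exact Finset.sum_congr rfl fun i _ => by ring
      _ = ∑ i, ∑ p : Fin dB × Fin dB, (G k * Z i).trace * (ω i p.1 p.2 * B y p.2 p.1) :=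
          Finset.sum_comm
      _ = ∑ i, (G k * Z i).trace * (B y * ω i).trace := by
          refine Finset.sum_congr rfl fun i _ => ?_
          rw [← Finset.mul_sum, etr]
  have hdet : (X * Yᴴ).det = ((D.det : ℝ) : ℂ) := by
    have hmap : X * Yᴴ = D.map Complex.ofReal := by
      ext k y
      rw [hXY k y, Matrix.map_apply]
    rw [hmap]
    exact (RingHom.map_det Complex.ofRealHom D).symm
  have hXX : (X * Xᴴ).PosSemidef := Matrix.posSemidef_self_mul_conjTranspose X
  have hYY : (Y * Yᴴ).PosSemidef := Matrix.posSemidef_self_mul_conjTranspose Y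
  have hrpos : 0 < nB + 1 := Nat.succ_pos nB
  -- Y-side determinant bound
  have htrY : (Y * Yᴴ).trace.re ≤ ((nB:ℝ) + 1) * dB := by
    have e1 : (Y * Yᴴ).trace = ∑ y, ((∑ p : Fin dB × Fin dB,
        Complex.normSq (B y p.1 p.2) : ℝ) : ℂ) := by
      rw [Matrix.trace]
      refine Finset.sum_congr rfl fun y _ => ?_
      rw [Matrix.diag_apply, Matrix.mul_apply, Complex.ofReal_sum]
      refine Finset.sum_congr rfl fun p _ => ?_
      rw [Matrix.conjTranspose_apply]
      show Y y p * star (Y y p) = _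
      rw [Complex.star_def, Complex.mul_conj]
    have e2 : (Y * Yᴴ).trace.re
        = ∑ y, ∑ p : Fin dB × Fin dB, Complex.normSq (B y p.1 p.2) := by
      rw [e1, ← Complex.ofReal_sum, Complex.ofReal_re]
    rw [e2]
    have e3 : ∀ y, ∑ p : Fin dB × Fin dB, Complex.normSq (B y p.1 p.2) ≤ (dB:ℝ) := by
      intro y
      refine Fin.cases ?_ ?_ y
      · rw [hB0, Fintype.sum_prod_type]
        refine le_of_eq ?_
        have h4 : ∀ a : Fin dB, ∑ b, Complex.normSq ((1 : Matrix (Fin dB) (Fin dB) ℂ) a b)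
            = 1 := by
          intro a
          rw [show (fun b => Complex.normSq ((1 : Matrix (Fin dB) (Fin dB) ℂ) a b))
              = fun b => if a = b then 1 else 0 from ?_]
          · rw [Finset.sum_ite_eq Finset.univ a (fun _ => (1:ℝ))]
            simp
          · funext b
            rw [Matrix.one_apply]
            by_cases hab : a = b <;> simp [hab]
        rw [Finset.sum_congr rfl fun a _ => h4 a]
        simp
      · intro z
        rw [hBy z, Fintype.sum_prod_type]
        exact frob_dichotomic_le (hMp z) (hMm z) (hPOVM z)
    calc ∑ y, ∑ p : Fin dB × Fin dB, Complex.normSq (B y p.1 p.2)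
        ≤ ∑ _y : Fin (nB+1), (dB:ℝ) := Finset.sum_le_sum fun y _ => e3 y
      _ = ((nB:ℝ) + 1) * dB := by
          rw [Finset.sum_const, Finset.card_univ, Fintype.card_fin]
          push_cast; ring
  have hdetY_nonneg : 0 ≤ (Y * Yᴴ).det.re := by
    rw [herm_det_re_eq hYY.1]
    exact Finset.prod_nonneg fun k _ => hYY.eigenvalues_nonneg k
  have hsumY_nonneg : 0 ≤ ∑ k, hYY.1.eigenvalues k :=
    Finset.sum_nonneg fun k _ => hYY.eigenvalues_nonneg k
  have hdetY : (Y * Yᴴ).det.re ≤ (dB:ℝ) ^ (nB+1) := by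
    rw [herm_det_re_eq hYY.1]
    refine le_trans (amgm_prod hrpos _ (fun k => hYY.eigenvalues_nonneg k)) ?_
    refine pow_le_pow_left₀ (div_nonneg hsumY_nonneg (by positivity)) ?_ _
    have hsum : ∑ k, hYY.1.eigenvalues k = (Y * Yᴴ).trace.re := by
      rw [trace_eq_sum_eig hYY.1, Complex.ofReal_re]
    rw [hsum, div_le_iff₀ (by positivity : (0:ℝ) < ((nB+1 : ℕ) : ℝ))]
    refine le_trans htrY (le_of_eq (by push_cast; ring))
  -- X-side determinant bound
  have hXdecomp : ∀ k p, X k p = ∑ i, (G k * Z i).trace * ω i p.1 p.2 := fun k p => rfl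
  have hsqrtX : ∑ k, Real.sqrt (hXX.1.eigenvalues k) ≤ 1 := by
    have hnuc := sum_sqrt_eig_le X (fun i k => (G k * Z i).trace)
      (fun i p => ω i p.1 p.2) hXdecomp hXX.1
    refine le_trans hnuc ?_
    have hstep : ∀ i, Real.sqrt (∑ k, Complex.normSq ((G k * Z i).trace))
        * Real.sqrt (∑ p : Fin dB × Fin dB, Complex.normSq (ω i p.1 p.2))
        ≤ (Z i).trace.re * (ω i).trace.re := by
      intro i
      have h1 : Real.sqrt (∑ k, Complex.normSq ((G k * Z i).trace)) ≤ (Z i).trace.re := by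
        refine le_trans (Real.sqrt_le_sqrt
          (le_trans (bessel_trace_bound G hGherm hGortho (Z i)) (psd_frobenius_le (hZ i)))) ?_
        rw [Real.sqrt_sq (psd_trace_re_nonneg (hZ i))]
      have h2 : Real.sqrt (∑ p : Fin dB × Fin dB, Complex.normSq (ω i p.1 p.2))
          ≤ (ω i).trace.re := by
        rw [Fintype.sum_prod_type]
        refine le_trans (Real.sqrt_le_sqrt (psd_frobenius_le (hω i))) ?_
        rw [Real.sqrt_sq (psd_trace_re_nonneg (hω i))]
      exact mul_le_mul h1 h2 (Real.sqrt_nonneg _) (psd_trace_re_nonneg (hZ i))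
    refine le_trans (Finset.sum_le_sum fun i _ => hstep i) ?_
    have hnorm' : ∑ i : Fin n → Fin m, (Z i).trace.re * (ω i).trace.re = 1 := by
      have e1 : ∑ i : Fin n → Fin m, (Z i).trace * (ω i).trace
          = ((∑ i : Fin n → Fin m, (Z i).trace.re * (ω i).trace.re : ℝ) : ℂ) := by
        push_cast
        refine Finset.sum_congr rfl fun i _ => ?_
        rw [psd_trace_eq (hZ i), psd_trace_eq (hω i)]
        push_cast
        rfl
      rw [e1] at hnorm
      exact_mod_cast hnorm
    rw [hnorm']
  have hdetX : (X * Xᴴ).det.re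
      ≤ ((1:ℝ) / ((nB:ℝ)+1)) ^ (nB+1) * (((1:ℝ) / ((nB:ℝ)+1)) ^ (nB+1)) := by
    have e1 : (X * Xᴴ).det.re = (∏ k, Real.sqrt (hXX.1.eigenvalues k))
        * (∏ k, Real.sqrt (hXX.1.eigenvalues k)) := by
      rw [herm_det_re_eq hXX.1, ← Finset.prod_mul_distrib]
      exact Finset.prod_congr rfl fun k _ =>
        (Real.mul_self_sqrt (hXX.eigenvalues_nonneg k)).symm
    rw [e1]
    have h2 : ∏ k, Real.sqrt (hXX.1.eigenvalues k) ≤ ((1:ℝ) / ((nB:ℝ)+1)) ^ (nB+1) := by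
      refine le_trans (amgm_prod hrpos _ (fun k => Real.sqrt_nonneg _)) ?_
      refine pow_le_pow_left₀ (div_nonneg
        (Finset.sum_nonneg fun k _ => Real.sqrt_nonneg _) (by positivity)) ?_ _
      have hcast : ((nB+1 : ℕ) : ℝ) = (nB:ℝ) + 1 := by push_cast; ring
      rw [hcast]
      gcongr
    have hp : 0 ≤ ∏ k, Real.sqrt (hXX.1.eigenvalues k) :=
      Finset.prod_nonneg fun k _ => Real.sqrt_nonneg _
    exact mul_le_mul h2 h2 hp (by positivity)
  -- assemble
  have habs2 : |D.det|^2 ≤ (((1:ℝ) / ((nB:ℝ)+1)) ^ (nB+1) * (((1:ℝ) / ((nB:ℝ)+1)) ^ (nB+1)))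
      * (dB:ℝ) ^ (nB+1) := by
    have e1 : |D.det| = ‖(X * Yᴴ).det‖ := by
      rw [hdet, Complex.norm_real, Real.norm_eq_abs]
    rw [e1]
    exact le_trans (det_cauchy_schwarz X Y)
      (mul_le_mul hdetX hdetY hdetY_nonneg (by positivity))
  have hfinal : |D.det| ≤ ((1:ℝ)/((nB:ℝ)+1))^(nB+1) * (Real.sqrt dB)^(nB+1) := by
    have h0 : |D.det| = Real.sqrt (|D.det|^2) := (Real.sqrt_sq (abs_nonneg _)).symm
    rw [h0]
    refine le_trans (Real.sqrt_le_sqrt habs2) ?_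
    have hsq : (((1:ℝ) / ((nB:ℝ)+1)) ^ (nB+1) * (((1:ℝ) / ((nB:ℝ)+1)) ^ (nB+1)))
        * (dB:ℝ) ^ (nB+1)
        = (((1:ℝ)/((nB:ℝ)+1))^(nB+1) * (Real.sqrt dB)^(nB+1))^2 := by
      have hq : ((Real.sqrt dB)^(nB+1))^2 = (dB:ℝ)^(nB+1) := by
        rw [← pow_mul, mul_comm (nB+1) 2, pow_mul, Real.sq_sqrt (by positivity : (0:ℝ) ≤ (dB:ℝ))]
      rw [mul_pow, hq]
      ring
    rw [hsq, Real.sqrt_sq (by positivity)]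
  refine le_trans hfinal (le_of_eq ?_)
  rw [div_pow, div_pow, one_pow]
  ring
end

section
/- Let d ≥ 1 and n ≥ 0. Let B_0,…,B_n be Hermitian d×d complex matrices with B_0 = I and tr(B_y²) ≤ d for all y ∈ {0,…,n}. Let T be a real (n+1)×(n+1) matrix such that the matrices G_l := Σ_{y=0}^n T_{yl}·B_y satisfy tr(G_k·G_l) = δ_{kl} for all k, l ∈ {0,…,n}. Then |det T| ≥ d^{−(n+1)/2}. -/
open Matrix Finset
open scoped ComplexOrder

private lemma expand_trace {d N : ℕ} (B : Fin N → Matrix (Fin d) (Fin d) ℂ)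
    (a b : Fin N → ℂ) :
    ((∑ y, a y • B y) * (∑ y, b y • B y)).trace
      = ∑ x, ∑ y, a x * b y * (B x * B y).trace := by
  rw [Finset.sum_mul_sum]
  rw [Matrix.trace_sum]
  refine Finset.sum_congr rfl fun x _ => ?_
  rw [Matrix.trace_sum]
  refine Finset.sum_congr rfl fun y _ => ?_
  rw [smul_mul_assoc, mul_smul_comm, Matrix.trace_smul, Matrix.trace_smul]
  simp [smul_smul, mul_assoc]

/-- if Hermitian `B_0 = I, B_1, …, B_n` on `ℂ^d` satisfy `tr(B_y²) ≤ d`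
and a real matrix `T` transforms them into a Hilbert–Schmidt orthonormal family
`G_l = Σ_y T_{yl} B_y`, then `|det T| ≥ d^{−(n+1)/2}`. -/
theorem stmt11 (d n : ℕ) (hd : 1 ≤ d)
    (B : Fin (n + 1) → Matrix (Fin d) (Fin d) ℂ)
    (hherm : ∀ y, (B y).IsHermitian)
    (hB0 : B 0 = 1)
    (htr : ∀ y, (B y * B y).trace ≤ (d : ℂ))
    (T : Matrix (Fin (n + 1)) (Fin (n + 1)) ℝ)
    (hortho : ∀ k l,
      ((∑ y, (T y k : ℂ) • B y) * (∑ y, (T y l : ℂ) • B y)).trace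
        = if k = l then 1 else 0) :
    (d : ℝ) ^ (-(((n : ℝ) + 1) / 2)) ≤ |T.det| := by
  -- the complex Gram matrix and its real counterpart
  set Mc : Matrix (Fin (n + 1)) (Fin (n + 1)) ℂ :=
    Matrix.of fun x y => (B x * B y).trace with hMc
  set M : Matrix (Fin (n + 1)) (Fin (n + 1)) ℝ :=
    Matrix.of fun x y => ((B x * B y).trace).re with hM
  -- the Gram entries are real
  have him : ∀ x y, ((B x * B y).trace).im = 0 := by
    intro x y
    have hst : (starRingEnd ℂ) ((B x * B y).trace) = (B x * B y).trace := by
      have h1 : (starRingEnd ℂ) ((B x * B y).trace) = ((B x * B y)ᴴ).trace := by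
        rw [Matrix.trace_conjTranspose]; rfl
      rw [h1, Matrix.conjTranspose_mul, (hherm x).eq, (hherm y).eq,
        Matrix.trace_mul_comm]
    exact Complex.conj_eq_iff_im.mp hst
  have hMcM : Mc = M.map (Complex.ofRealHom : ℝ →+* ℂ) := by
    ext x y
    simp only [hMc, hM, Matrix.map_apply, Matrix.of_apply]
    exact Complex.ext (by simp) (by simp [him x y])
  -- key identity  Tᵀ M T = 1  over ℂ
  set Tc : Matrix (Fin (n + 1)) (Fin (n + 1)) ℂ :=
    T.map (Complex.ofRealHom : ℝ →+* ℂ) with hTc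
  have hkey : Tcᵀ * Mc * Tc = 1 := by
    ext k l
    have h1 := (expand_trace B (fun y => (T y k : ℂ)) (fun y => (T y l : ℂ))).symm.trans
      (hortho k l)
    have h2 : (Tcᵀ * Mc * Tc) k l
        = ∑ x, ∑ y, (T x k : ℂ) * (T y l : ℂ) * Mc x y := by
      simp only [Matrix.mul_apply, Matrix.transpose_apply, Finset.sum_mul, hTc,
        Matrix.map_apply, Complex.ofRealHom_eq_coe]
      rw [Finset.sum_comm]
      refine Finset.sum_congr rfl fun x _ => Finset.sum_congr rfl fun y _ => by ring
    rw [h2]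
    rw [show (∑ x, ∑ y, (T x k : ℂ) * (T y l : ℂ) * Mc x y)
        = ∑ x, ∑ y, (T x k : ℂ) * (T y l : ℂ) * (B x * B y).trace from rfl]
    rw [Matrix.one_apply]; exact h1
  -- determinant identity
  have hdetc : Tc.det * Mc.det * Tc.det = 1 := by
    have := congrArg Matrix.det hkey
    rwa [Matrix.det_mul, Matrix.det_mul, Matrix.det_transpose, Matrix.det_one] at this
  have hdetTc : Tc.det = (T.det : ℂ) := by
    rw [hTc, ← RingHom.mapMatrix_apply, ← RingHom.map_det]; rfl
  have hdetMc : Mc.det = (M.det : ℂ) := by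
    rw [hMcM, ← RingHom.mapMatrix_apply, ← RingHom.map_det]; rfl
  have hdetR : T.det * M.det * T.det = 1 := by
    have := hdetc
    rw [hdetTc, hdetMc] at this
    exact_mod_cast this
  have hTdet_ne : T.det ≠ 0 := by
    intro h; rw [h] at hdetR; simp at hdetR
  -- M is positive semidefinite
  have hMherm : M.IsHermitian := by
    ext x y
    simp only [hM, Matrix.conjTranspose_apply, Matrix.of_apply, star_trivial]
    rw [Matrix.trace_mul_comm]
  have hMpsd : M.PosSemidef := by
    refine Matrix.PosSemidef.of_dotProduct_mulVec_nonneg hMherm fun v => ?_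
    set A : Matrix (Fin d) (Fin d) ℂ := ∑ y, (v y : ℂ) • B y with hA
    have hAherm : Aᴴ = A := by
      rw [hA, Matrix.conjTranspose_sum]
      refine Finset.sum_congr rfl fun y _ => ?_
      rw [Matrix.conjTranspose_smul, (hherm y).eq]
      simp
    have htrA : (A * A).trace = ∑ x, ∑ y, (v x : ℂ) * (v y : ℂ) * (B x * B y).trace :=
      expand_trace B _ _
    have hnn : 0 ≤ (A * A).trace := by
      rw [show A * A = Aᴴ * A by rw [hAherm]]
      rw [Matrix.trace]
      refine Finset.sum_nonneg fun j _ => ?_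
      simp only [Matrix.diag_apply, Matrix.mul_apply, Matrix.conjTranspose_apply]
      exact Finset.sum_nonneg fun i _ => star_mul_self_nonneg (A i j)
    have hre : star v ⬝ᵥ (M *ᵥ v) = ((A * A).trace).re := by
      rw [htrA]
      simp only [dotProduct, Matrix.mulVec, dotProduct, Pi.star_apply,
        star_trivial, hM, Matrix.of_apply]
      rw [Complex.re_sum]
      refine Finset.sum_congr rfl fun x _ => ?_
      rw [Complex.re_sum, Finset.mul_sum]
      refine Finset.sum_congr rfl fun y _ => ?_
      have : ((v x : ℂ) * (v y : ℂ) * (B x * B y).trace).re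
          = v x * v y * ((B x * B y).trace).re := by
        simp [Complex.mul_re, him x y]
      rw [this]; ring
    rw [hre]
    exact (Complex.le_def.mp hnn).1
  -- eigenvalues
  set z : Fin (n + 1) → ℝ := hMherm.eigenvalues with hz
  have hznn : ∀ i, 0 ≤ z i := hMpsd.eigenvalues_nonneg
  have hdetM_eq : M.det = ∏ i, z i := by
    have := hMherm.det_eq_prod_eigenvalues
    rw [this]; norm_cast
  have htrM_eq : M.trace = ∑ i, z i := by
    nth_rewrite 1 [hMherm.spectral_theorem]
    rw [Unitary.conjStarAlgAut_apply, Matrix.trace_mul_cycle]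
    rw [show (star (hMherm.eigenvectorUnitary : Matrix (Fin (n+1)) (Fin (n+1)) ℝ)) *
        (hMherm.eigenvectorUnitary : Matrix (Fin (n+1)) (Fin (n+1)) ℝ)
        = 1 from hMherm.eigenvectorUnitary.2.1]
    rw [one_mul, Matrix.trace_diagonal]
    rfl
  -- diagonal bound: tr M ≤ (n+1) d
  have hdiag : ∀ y, M y y ≤ (d : ℝ) := fun y => (Complex.le_def.mp (htr y)).1
  have htrM_le : ∑ i, z i ≤ (n + 1 : ℝ) * d := by
    rw [← htrM_eq, Matrix.trace]
    calc ∑ i, M.diag i ≤ ∑ _i : Fin (n + 1), (d : ℝ) :=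
          Finset.sum_le_sum fun i _ => hdiag i
      _ = (n + 1 : ℝ) * d := by simp [mul_comm]
  have hd0 : (0 : ℝ) < d := by exact_mod_cast hd
  -- AM–GM: det M ≤ d^(n+1)
  have hn1 : ((n : ℝ) + 1) ≠ 0 := by positivity
  have hamgm : ∏ i, z i ≤ (d : ℝ) ^ (n + 1) := by
    have hgm := Real.geom_mean_le_arith_mean_weighted Finset.univ
      (fun _ => 1 / ((n : ℝ) + 1)) z (fun i _ => by positivity)
      (by simp [Finset.card_univ]; field_simp)
      (fun i _ => hznn i)
    have harith : ∑ i, (1 / ((n : ℝ) + 1)) * z i ≤ (d : ℝ) := by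
      rw [← Finset.mul_sum]
      rw [div_mul_eq_mul_div, one_mul, div_le_iff₀ (by positivity)]
      linarith [htrM_le]
    have hprod_eq : (∏ i, z i ^ (1 / ((n : ℝ) + 1))) ^ (n + 1) = ∏ i, z i := by
      rw [← Finset.prod_pow]
      refine Finset.prod_congr rfl fun i _ => ?_
      rw [← Real.rpow_natCast (z i ^ (1 / ((n : ℝ) + 1))) (n + 1),
        ← Real.rpow_mul (hznn i)]
      push_cast
      rw [one_div, inv_mul_cancel₀ hn1, Real.rpow_one]
    calc ∏ i, z i = (∏ i, z i ^ (1 / ((n : ℝ) + 1))) ^ (n + 1) := hprod_eq.symm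
      _ ≤ (d : ℝ) ^ (n + 1) := by
          refine pow_le_pow_left₀ (Finset.prod_nonneg fun i _ => Real.rpow_nonneg (hznn i) _)
            (le_trans hgm harith) _
  have hdetM_le : M.det ≤ (d : ℝ) ^ (n + 1) := hdetM_eq ▸ hamgm
  have hdetM_pos : 0 < M.det := by
    rcases lt_or_eq_of_le (hdetM_eq ▸ Finset.prod_nonneg fun i _ => hznn i) with h | h
    · exact h
    · exfalso; rw [← h] at hdetR; simp at hdetR
  -- conclude
  have hsq : T.det ^ 2 = (M.det)⁻¹ := by
    field_simp
    nlinarith [hdetR]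
  have hsq_ge : ((d : ℝ) ^ (n + 1))⁻¹ ≤ |T.det| ^ 2 := by
    rw [sq_abs, hsq]
    exact inv_anti₀ hdetM_pos hdetM_le
  have hlhs_sq : ((d : ℝ) ^ (-(((n : ℝ) + 1) / 2))) ^ 2 = ((d : ℝ) ^ (n + 1))⁻¹ := by
    rw [← Real.rpow_natCast ((d : ℝ) ^ (-(((n : ℝ) + 1) / 2))) 2,
      ← Real.rpow_mul hd0.le]
    rw [show (-(((n : ℝ) + 1) / 2)) * (2 : ℕ) = -((n : ℝ) + 1) by push_cast; ring]
    rw [Real.rpow_neg hd0.le, show ((n : ℝ) + 1) = ((n + 1 : ℕ) : ℝ) by push_cast; ring,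
      Real.rpow_natCast]
  have h2 : ((d : ℝ) ^ (-(((n : ℝ) + 1) / 2))) ^ 2 ≤ |T.det| ^ 2 := by
    rw [hlhs_sq]; exact hsq_ge
  exact (pow_le_pow_iff_left₀ (Real.rpow_nonneg hd0.le _) (abs_nonneg _) two_ne_zero).mp h2
end

section
/- Let n ≥ 1, let q > 0, and let s_0 ≥ s_1 ≥ … ≥ s_n ≥ 0 be real numbers with s_0 ≥ q and Π_{i=0}^n s_i ≤ q^{n+1}. Then Σ_{i=0}^n s_i ≥ q + n·((Π_{i=0}^n s_i)/q)^{1/n}. -/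
open Finset

lemma key_geom (n : ℕ) (u : ℝ) (hu0 : 0 ≤ u) (hu1 : u ≤ 1) :
    (n : ℝ) * u ^ n * (1 - u) ≤ 1 - u ^ n := by
  have h1 : 1 - u ^ n = (∑ i ∈ range n, u ^ i) * (1 - u) := by
    have := geom_sum_mul u n
    nlinarith [this]
  rw [h1]
  have h2 : (n : ℝ) * u ^ n ≤ ∑ i ∈ range n, u ^ i := by
    calc (n : ℝ) * u ^ n = ∑ _i ∈ range n, u ^ n := by
          rw [Finset.sum_const, card_range, nsmul_eq_mul]
      _ ≤ ∑ i ∈ range n, u ^ i := by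
          apply Finset.sum_le_sum
          intro i hi
          exact pow_le_pow_of_le_one hu0 hu1 (le_of_lt (mem_range.mp hi))
  exact mul_le_mul_of_nonneg_right h2 (by linarith)

lemma key2 (n : ℕ) (hn : 1 ≤ n) (q s0 : ℝ) (hq : 0 < q) (hs0 : q ≤ s0) :
    (n : ℝ) * q * (1 - (q / s0) ^ ((1:ℝ)/n)) ≤ s0 - q := by
  have hs0' : 0 < s0 := lt_of_lt_of_le hq hs0
  set u : ℝ := (q / s0) ^ ((1:ℝ)/n) with hu
  have hqs : 0 < q / s0 := div_pos hq hs0'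
  have hu0 : 0 < u := Real.rpow_pos_of_pos hqs _
  have hu1 : u ≤ 1 := Real.rpow_le_one hqs.le (by
    rw [div_le_one hs0']; exact hs0) (by positivity)
  have hun : u ^ n = q / s0 := by
    rw [hu, ← Real.rpow_natCast ((q / s0) ^ ((1:ℝ)/n)) n, ← Real.rpow_mul hqs.le]
    rw [one_div, inv_mul_cancel₀ (by exact_mod_cast Nat.pos_of_ne_zero (by omega) |>.ne')]
    exact Real.rpow_one _
  have hkey := key_geom n u hu0.le hu1
  rw [hun] at hkey
  have := mul_le_mul_of_nonneg_right hkey hs0'.le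
  have hq' : q / s0 * s0 = q := div_mul_cancel₀ q hs0'.ne'
  nlinarith [this]

/-- if `s_0 ≥ s_1 ≥ … ≥ s_n ≥ 0` with `s_0 ≥ q > 0` and
`Π_i s_i ≤ q^{n+1}`, then `Σ_i s_i ≥ q + n·((Π_i s_i)/q)^{1/n}`. -/
theorem stmt13 (n : ℕ) (hn : 1 ≤ n) (q : ℝ) (hq : 0 < q)
    (s : Fin (n + 1) → ℝ)
    (hmono : ∀ i j : Fin (n + 1), i ≤ j → s j ≤ s i)
    (hnonneg : ∀ i, 0 ≤ s i)
    (hs0 : q ≤ s 0)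
    (hprod : ∏ i, s i ≤ q ^ (n + 1)) :
    q + (n : ℝ) * ((∏ i, s i) / q) ^ ((1 : ℝ) / n) ≤ ∑ i, s i := by
  have hs0' : 0 < s 0 := lt_of_lt_of_le hq hs0
  have hnpos : (0:ℝ) < n := by exact_mod_cast hn
  set T : ℝ := ∏ i : Fin n, s i.succ with hT
  have hTnn : 0 ≤ T := Finset.prod_nonneg fun i _ => hnonneg _
  have hPsplit : ∏ i, s i = s 0 * T := by rw [Fin.prod_univ_succ]
  have hSsplit : ∑ i, s i = s 0 + ∑ i : Fin n, s i.succ := by rw [Fin.sum_univ_succ]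
  -- AM-GM on the tail
  have hamgm : (n : ℝ) * T ^ ((1:ℝ)/n) ≤ ∑ i : Fin n, s i.succ := by
    have h := Real.geom_mean_le_arith_mean_weighted Finset.univ
      (fun _ : Fin n => (1:ℝ)/n) (fun i => s i.succ)
      (fun i _ => by positivity)
      (by simp [Finset.sum_const, Finset.card_univ]; field_simp)
      (fun i _ => hnonneg _)
    rw [Real.finset_prod_rpow _ _ (fun i _ => hnonneg _)] at h
    have h' : T ^ ((1:ℝ)/n) ≤ (1/n) * ∑ i : Fin n, s i.succ := by
      simpa [← Finset.mul_sum] using h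
    calc (n : ℝ) * T ^ ((1:ℝ)/n) ≤ (n:ℝ) * ((1/n) * ∑ i : Fin n, s i.succ) :=
          mul_le_mul_of_nonneg_left h' hnpos.le
      _ = ∑ i : Fin n, s i.succ := by field_simp
  -- main estimate
  set A : ℝ := (q / s 0) ^ ((1:ℝ)/n) with hA
  set X : ℝ := T ^ ((1:ℝ)/n) with hX
  have hqs : 0 < q / s 0 := div_pos hq hs0'
  have hA0 : 0 < A := Real.rpow_pos_of_pos hqs _
  have hA1 : A ≤ 1 := Real.rpow_le_one hqs.le (by rw [div_le_one hs0']; exact hs0) (by positivity)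
  set B : ℝ := A⁻¹ with hB
  have hAB : A * B = 1 := mul_inv_cancel₀ hA0.ne'
  have hB1 : 1 ≤ B := (one_le_inv_iff₀).mpr ⟨hA0, hA1⟩
  have hXnn : 0 ≤ X := Real.rpow_nonneg hTnn _
  have hnne : (n:ℝ) ≠ 0 := hnpos.ne'
  have hqpow : ((q ^ n : ℝ)) ^ ((1:ℝ)/n) = q := by
    rw [← Real.rpow_natCast q n, ← Real.rpow_mul hq.le]
    rw [mul_one_div, div_self hnne, Real.rpow_one]
  have hTle : X ≤ q * A := by
    have h5 : T ≤ q ^ n * (q / s 0) := by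
      rw [hPsplit] at hprod
      rw [mul_div_assoc', pow_succ'] at *
      rw [le_div_iff₀ hs0']
      nlinarith [hprod]
    calc X ≤ (q ^ n * (q / s 0)) ^ ((1:ℝ)/n) :=
          Real.rpow_le_rpow hTnn h5 (by positivity)
      _ = q * A := by
          rw [Real.mul_rpow (by positivity) hqs.le, hqpow]
  have hrw : ((s 0 * T) / q) ^ ((1:ℝ)/n) = B * X := by
    have : (s 0 * T) / q = (s 0 / q) * T := by ring
    rw [this, Real.mul_rpow (div_nonneg hs0'.le hq.le) hTnn]
    congr 1
    rw [hB, hA, ← Real.inv_rpow hqs.le, inv_div]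
  have hkey2 := key2 n hn q (s 0) hq hs0
  rw [hPsplit, hSsplit, hrw]
  have h1 : (n:ℝ) * X * (B - 1) ≤ (n:ℝ) * (q * A) * (B - 1) := by
    apply mul_le_mul_of_nonneg_right _ (by linarith)
    exact mul_le_mul_of_nonneg_left hTle hnpos.le
  have hq3 : (n:ℝ) * (q * A) * B = n * q := by
    calc (n:ℝ) * (q * A) * B = n * q * (A * B) := by ring
      _ = n * q := by rw [hAB, mul_one]
  nlinarith [hamgm, h1, hq3, hkey2]
end

section
/- Let d ≥ 2 and set ζ = exp(2πi/d). In ℂ^d with computational basis {e_k}_{k∈ℤ_d}, define the Fourier basis f_k = (1/√d)·Σ_{l∈ℤ_d} ζ^{kl}·e_l, the shift operator U_x with U_x e_k = e_{k+x mod d}, and the clock operator V_y with V_y e_k = ζ^{yk}·e_k. Let χ_± be the normalized vectors proportional to e_0 ± f_0, let μ_1 = 2/(√d·(√d−1)·(√d+2)) and μ_2 = (1+√d)/(√d·(√d−1)·(√d+2)), and define Z_{00} = μ_1·χ_−χ_−ᴴ + μ_2·(I − χ_+χ_+ᴴ − χ_−χ_−ᴴ) and Z_{kl} = U_k V_l Z_{00}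 V_lᴴ U_kᴴ for k, l ∈ ℤ_d. Then: (i) each Z_{kl} is positive semidefinite with tr(Z_{kl}) = 1; and (ii) Z_{kl} = Z_{kt} + Z_{sl} − Z_{st} for all k, l, s, t ∈ ℤ_d. -/
open Matrix Finset
open scoped ComplexOrder

namespace Stmt17

variable (d : ℕ) [NeZero d]

/-- `ζ = exp(2πi/d)`. -/
noncomputable def zeta : ℂ := Complex.exp (2 * Real.pi * Complex.I / d)

/-- The computational basis vector `e_k`. -/
def e (k : Fin d) : Fin d → ℂ := fun l => if l = k then 1 else 0

/-- The Fourier basis vector `f_k = (1/√d)·Σ_l ζ^{kl} e_l`. -/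
noncomputable def f (k : Fin d) : Fin d → ℂ :=
  fun l => (1 / Real.sqrt d : ℝ) * zeta d ^ (k.val * l.val)

/-- The shift operator `U_x`, acting as `U_x e_k = e_{k+x}` (indices mod `d`). -/
def U (x : Fin d) : Matrix (Fin d) (Fin d) ℂ :=
  fun i j => if i = j + x then 1 else 0

/-- The clock operator `V_y`, acting as `V_y e_k = ζ^{yk} e_k`. -/
noncomputable def V (y : Fin d) : Matrix (Fin d) (Fin d) ℂ :=
  Matrix.diagonal fun k : Fin d => zeta d ^ (y.val * k.val)

/-- The normalized vector `χ₊` proportional to `e_0 + f_0`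
(note `‖e_0 + f_0‖² = 2 + 2/√d`). -/
noncomputable def chiP : Fin d → ℂ :=
  ((1 / Real.sqrt (2 + 2 / Real.sqrt d) : ℝ) : ℂ) • (e d 0 + f d 0)

/-- The normalized vector `χ₋` proportional to `e_0 − f_0`
(note `‖e_0 − f_0‖² = 2 − 2/√d`). -/
noncomputable def chiM : Fin d → ℂ :=
  ((1 / Real.sqrt (2 - 2 / Real.sqrt d) : ℝ) : ℂ) • (e d 0 - f d 0)

noncomputable def mu1 : ℝ :=
  2 / (Real.sqrt d * (Real.sqrt d - 1) * (Real.sqrt d + 2))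

noncomputable def mu2 : ℝ :=
  (1 + Real.sqrt d) / (Real.sqrt d * (Real.sqrt d - 1) * (Real.sqrt d + 2))

/-- `Z₀₀ = μ₁·χ₋χ₋ᴴ + μ₂·(I − χ₊χ₊ᴴ − χ₋χ₋ᴴ)`. -/
noncomputable def Z00 : Matrix (Fin d) (Fin d) ℂ :=
  ((mu1 d : ℝ) : ℂ) • Matrix.vecMulVec (chiM d) (star (chiM d))
  + ((mu2 d : ℝ) : ℂ) • ((1 : Matrix (Fin d) (Fin d) ℂ)
      - Matrix.vecMulVec (chiP d) (star (chiP d))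
      - Matrix.vecMulVec (chiM d) (star (chiM d)))

/-- `Z_{kl} = U_k V_l Z₀₀ V_lᴴ U_kᴴ`. -/
noncomputable def Zkl (k l : Fin d) : Matrix (Fin d) (Fin d) ℂ :=
  U d k * V d l * Z00 d * (V d l)ᴴ * (U d k)ᴴ

end Stmt17

/-! ### Auxiliary lemmas -/

set_option linter.unusedSectionVars false

namespace Stmt17Aux

open Stmt17

section General

variable {d : ℕ} [NeZero d]

lemma vecMulVec_conj_transform (M : Matrix (Fin d) (Fin d) ℂ) (u v : Fin d → ℂ) :
    M * Matrix.vecMulVec u (star v) * Mᴴ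
      = Matrix.vecMulVec (M *ᵥ u) (star (M *ᵥ v)) := by
  ext i j
  simp only [Matrix.mul_apply, Matrix.vecMulVec_apply, Matrix.conjTranspose_apply,
    Matrix.mulVec, dotProduct, Pi.star_apply, Finset.sum_mul, Finset.mul_sum, map_sum,
    _root_.map_mul, RCLike.star_def]
  apply Finset.sum_congr rfl; intro b _
  apply Finset.sum_congr rfl; intro a _
  ring

lemma vecMulVec_mul_vecMulVec (u v x y : Fin d → ℂ) :
    Matrix.vecMulVec u (star v) * Matrix.vecMulVec x (star y)
      = (star v ⬝ᵥ x) • Matrix.vecMulVec u (star y) := by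
  ext i j
  simp only [Matrix.mul_apply, Matrix.vecMulVec_apply, dotProduct, Pi.star_apply,
    Matrix.smul_apply, smul_eq_mul, Finset.sum_mul, Finset.mul_sum]
  apply Finset.sum_congr rfl; intro a _
  ring

lemma vecMulVec_star_hermitian (u : Fin d → ℂ) :
    (Matrix.vecMulVec u (star u)).IsHermitian := by
  ext i j
  simp only [Matrix.conjTranspose_apply, Matrix.vecMulVec_apply, Pi.star_apply, star_mul',
    star_star]
  ring

lemma smul_posSemidef {c : ℝ} (hc : 0 ≤ c) {A : Matrix (Fin d) (Fin d) ℂ}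
    (hA : A.PosSemidef) : ((c : ℂ) • A).PosSemidef := by
  constructor
  · ext i j
    simp only [Matrix.conjTranspose_apply, Matrix.smul_apply, smul_eq_mul, star_mul',
      Complex.conj_ofReal]
    have h := congrFun (congrFun hA.1 i) j
    rw [Matrix.conjTranspose_apply] at h
    rw [h]
    simp [RCLike.star_def, Complex.conj_ofReal, mul_comm]
  · intro x
    have h := hA.2 x
    have e : (x.sum fun i xi => x.sum fun j xj => star xi * ((c:ℂ) • A) i j * xj)
        = (c:ℂ) * x.sum fun i xi => x.sum fun j xj => star xi * A i j * xj := by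
      simp only [Finsupp.sum, Finset.mul_sum, Matrix.smul_apply, smul_eq_mul]
      apply Finset.sum_congr rfl; intro a _; apply Finset.sum_congr rfl; intro b _; ring
    rw [e]
    exact mul_nonneg (Complex.zero_le_real.mpr hc) h

end General

variable (d : ℕ) [NeZero d]

/-! #### Roots of unity -/

lemma zeta_pow_d : zeta d ^ d = 1 := by
  rw [zeta, ← Complex.exp_nat_mul]
  have hd : (d : ℂ) ≠ 0 := Nat.cast_ne_zero.mpr (NeZero.ne d)
  rw [show (d : ℂ) * (2 * Real.pi * Complex.I / d) = 2 * Real.pi * Complex.I by field_simp]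
  exact Complex.exp_two_pi_mul_I

lemma zeta_pow_mod (a : ℕ) : zeta d ^ a = zeta d ^ (a % d) := by
  conv_lhs => rw [← Nat.div_add_mod a d]
  rw [pow_add, pow_mul, zeta_pow_d, one_pow, one_mul]

lemma zeta_pow_congr {a b : ℕ} (h : a % d = b % d) : zeta d ^ a = zeta d ^ b := by
  rw [zeta_pow_mod, h, ← zeta_pow_mod]

lemma zeta_ne_zero : zeta d ≠ 0 := Complex.exp_ne_zero _

lemma conj_zeta : (starRingEnd ℂ) (zeta d) = (zeta d)⁻¹ := by
  rw [zeta, ← Complex.exp_conj, ← Complex.exp_neg]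
  congr 1
  simp [map_div₀, Complex.conj_I, map_ofNat]
  ring

lemma conj_zeta_pow_mul_self (n : ℕ) : (starRingEnd ℂ) (zeta d ^ n) * zeta d ^ n = 1 := by
  rw [map_pow, conj_zeta, ← mul_pow, inv_mul_cancel₀ (zeta_ne_zero d), one_pow]

lemma zeta_pow_mul_conj_self (n : ℕ) : zeta d ^ n * (starRingEnd ℂ) (zeta d ^ n) = 1 := by
  rw [mul_comm]; exact conj_zeta_pow_mul_self d n

/-! #### Unitarity and shift action -/

lemma U_mul_conjTranspose (k : Fin d) : U d k * (U d k)ᴴ = 1 := by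
  ext i j
  simp only [Matrix.mul_apply, Matrix.conjTranspose_apply, U, Matrix.one_apply]
  have key : ∀ b : Fin d, (if i = b + k then (1:ℂ) else 0) * star (if j = b + k then (1:ℂ) else 0)
      = if b = i - k then (if j = b + k then 1 else 0) else 0 := by
    intro b
    by_cases hb : b = i - k
    · subst hb
      rw [if_pos rfl, if_pos (by rw [sub_add_cancel]), one_mul]
      split <;> simp
    · rw [if_neg (fun hc => hb (by rw [hc, add_sub_cancel_right])), if_neg hb, zero_mul]
  rw [Finset.sum_congr rfl (fun b _ => key b), Finset.sum_ite_eq' Finset.univ (i-k)]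
  simp [sub_add_cancel, eq_comm]

lemma V_mul_conjTranspose (l : Fin d) : V d l * (V d l)ᴴ = 1 := by
  ext i j
  simp only [V, Matrix.diagonal_conjTranspose, Matrix.diagonal_mul_diagonal]
  by_cases h : i = j
  · subst h
    simp only [Matrix.diagonal_apply_eq, Matrix.one_apply_eq, Pi.star_apply, RCLike.star_def]
    rw [mul_comm]
    exact conj_zeta_pow_mul_self d _
  · simp [Matrix.diagonal_apply_ne _ h, Matrix.one_apply_ne h]

lemma UV_apply (k l : Fin d) (i j : Fin d) :
    (U d k * V d l) i j = if i = j + k then zeta d ^ (l.val * j.val) else 0 := by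
  rw [Matrix.mul_apply, Finset.sum_eq_single j]
  · by_cases h : i = j + k
    · rw [if_pos h]; simp [U, V, h, Matrix.diagonal_apply_eq]
    · rw [if_neg h]; simp [U, V, h]
  · intro b _ hb
    simp [V, Matrix.diagonal_apply_ne _ hb]
  · intro h; exact absurd (Finset.mem_univ _) h

lemma UV_mulVec_e (k l : Fin d) : (U d k * V d l) *ᵥ e d 0 = e d k := by
  funext i
  rw [Matrix.mulVec, dotProduct, Finset.sum_eq_single (0 : Fin d)]
  · simp [UV_apply, e, zero_add]
  · intro b _ hb; simp [e, hb]
  · intro h; exact absurd (Finset.mem_univ _) h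

lemma UV_mulVec_f (k l : Fin d) :
    (U d k * V d l) *ᵥ f d 0 = zeta d ^ (l.val * (d - k.val)) • f d l := by
  funext i
  rw [Matrix.mulVec, dotProduct, Finset.sum_eq_single (i - k)]
  · rw [UV_apply, if_pos (by rw [sub_add_cancel])]
    simp only [f, Fin.val_zero, Nat.zero_mul, pow_zero, mul_one, Pi.smul_apply, smul_eq_mul]
    have h1 : l.val * ((i - k).val) ≡ l.val * ((d - k.val) + i.val) [MOD d] := by
      rw [Fin.sub_def]
      exact (Nat.mod_modEq _ d).mul_left _
    have h2 : l.val * ((d - k.val) + i.val) = l.val * (d - k.val) + l.val * i.val := by ring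
    have h3 : zeta d ^ (l.val * (i - k).val) = zeta d ^ (l.val * (d - k.val) + l.val * i.val) :=
      zeta_pow_congr d (h2 ▸ h1)
    rw [h3, pow_add]
    ring
  · intro b _ hb
    rw [UV_apply, if_neg (fun hc => hb (by rw [hc, add_sub_cancel_right])), zero_mul]
  · intro h; exact absurd (Finset.mem_univ _) h

/-! #### Real scalar identities -/

noncomputable def alpha : ℝ :=
  mu1 d * (1 / (2 - 2 / Real.sqrt d))
    - mu2 d * (1 / (2 + 2 / Real.sqrt d) + 1 / (2 - 2 / Real.sqrt d))

section Real

variable (hd : 2 ≤ d)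
include hd

lemma one_lt_s : 1 < Real.sqrt d := by
  rw [show (1:ℝ) = Real.sqrt 1 by simp]
  exact Real.sqrt_lt_sqrt (by norm_num) (by exact_mod_cast hd.trans_lt' (by norm_num))

lemma s_pos : 0 < Real.sqrt d := lt_trans one_pos (one_lt_s d hd)

lemma twoPs_pos : (0:ℝ) < 2 + 2 / Real.sqrt d := by positivity

lemma twoMs_pos : (0:ℝ) < 2 - 2 / Real.sqrt d := by
  have h := one_lt_s d hd
  have h0 := s_pos d hd
  have : 2 / Real.sqrt d < 2 := by
    rw [div_lt_iff₀ h0]; nlinarith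
  linarith

lemma alpha_eq : alpha d = -(1 / ((Real.sqrt d - 1) * (Real.sqrt d + 2))) := by
  have h1 := one_lt_s d hd
  have h0 := s_pos d hd
  have hp := twoPs_pos d hd
  have hm := twoMs_pos d hd
  set s := Real.sqrt d with hs
  have hne0 : s ≠ 0 := h0.ne'
  have hne1 : s - 1 ≠ 0 := by linarith
  have hne1' : s + 1 ≠ 0 := by linarith
  have hne2 : s + 2 ≠ 0 := by linarith
  have e1 : 1 / (2 - 2 / s) = s / (2 * (s - 1)) := by
    rw [div_eq_div_iff hm.ne' (by positivity)]
    field_simp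
  have e2 : 1 / (2 + 2 / s) = s / (2 * (s + 1)) := by
    rw [div_eq_div_iff hp.ne' (by positivity)]
    field_simp
  unfold alpha mu1 mu2
  rw [← hs, e1, e2]
  field_simp
  ring

lemma master (x y δ : ℝ) :
    mu1 d * ((1 / Real.sqrt (2 - 2 / Real.sqrt d)) * (x - 1 / Real.sqrt d)
        * ((1 / Real.sqrt (2 - 2 / Real.sqrt d)) * (y - 1 / Real.sqrt d)))
      + mu2 d * (δ
        - (1 / Real.sqrt (2 + 2 / Real.sqrt d)) * (x + 1 / Real.sqrt d)
          * ((1 / Real.sqrt (2 + 2 / Real.sqrt d)) * (y + 1 / Real.sqrt d))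
        - (1 / Real.sqrt (2 - 2 / Real.sqrt d)) * (x - 1 / Real.sqrt d)
          * ((1 / Real.sqrt (2 - 2 / Real.sqrt d)) * (y - 1 / Real.sqrt d)))
    = mu2 d * δ + alpha d * (x * y + (1 / Real.sqrt d) * (1 / Real.sqrt d)) := by
  have h1 := one_lt_s d hd
  have h0 := s_pos d hd
  have hp := twoPs_pos d hd
  have hm := twoMs_pos d hd
  set s := Real.sqrt d with hs
  set cp := 1 / Real.sqrt (2 + 2 / s) with hcpd
  set cm := 1 / Real.sqrt (2 - 2 / s) with hcmd
  have hcp : cp * cp = 1 / (2 + 2 / s) := by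
    rw [hcpd, div_mul_div_comm, one_mul, Real.mul_self_sqrt hp.le]
  have hcm : cm * cm = 1 / (2 - 2 / s) := by
    rw [hcmd, div_mul_div_comm, one_mul, Real.mul_self_sqrt hm.le]
  rw [show cp * (x + 1/s) * (cp * (y + 1/s)) = (cp * cp) * ((x + 1/s) * (y + 1/s)) from by ring]
  rw [show cm * (x - 1/s) * (cm * (y - 1/s)) = (cm * cm) * ((x - 1/s) * (y - 1/s)) from by ring]
  rw [hcp, hcm]
  have hne0 : s ≠ 0 := h0.ne'
  have hne1 : s - 1 ≠ 0 := by linarith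
  have hne1' : s + 1 ≠ 0 := by linarith
  have hne2 : s + 2 ≠ 0 := by linarith
  have hnep : 2 + 2 / s ≠ 0 := hp.ne'
  have hnem : 2 - 2 / s ≠ 0 := hm.ne'
  have e1 : 1 / (2 - 2 / s) = s / (2 * (s - 1)) := by
    rw [div_eq_div_iff hm.ne' (by positivity)]
    field_simp
  have e2 : 1 / (2 + 2 / s) = s / (2 * (s + 1)) := by
    rw [div_eq_div_iff hp.ne' (by positivity)]
    field_simp
  rw [e1, e2, alpha_eq d hd, ← hs]
  unfold mu1 mu2
  rw [← hs]
  field_simp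
  ring

lemma denom_pos : 0 < Real.sqrt d * (Real.sqrt d - 1) * (Real.sqrt d + 2) := by
  have h1 := one_lt_s d hd
  have h0 := s_pos d hd
  exact mul_pos (mul_pos h0 (sub_pos.mpr h1)) (by linarith)

lemma mu1_nonneg : 0 ≤ mu1 d := le_of_lt (div_pos (by norm_num) (denom_pos d hd))

lemma mu2_nonneg : 0 ≤ mu2 d := by
  have h0 := s_pos d hd
  exact le_of_lt (div_pos (by linarith) (denom_pos d hd))

lemma trace_id : mu2 d * d + 2 * alpha d = 1 := by
  rw [alpha_eq d hd]
  have h1 := one_lt_s d hd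
  have h0 := s_pos d hd
  set s := Real.sqrt d with hs
  have hd2 : (d : ℝ) = s ^ 2 := by rw [hs, Real.sq_sqrt (Nat.cast_nonneg d)]
  have hne0 : s ≠ 0 := h0.ne'
  have hne1 : s - 1 ≠ 0 := by linarith
  have hne2 : s + 2 ≠ 0 := by linarith
  unfold mu2
  rw [← hs, hd2]
  field_simp
  ring

end Real


/-! #### Entry formulas -/

lemma e_zero_apply (m : Fin d) :
    e d 0 m = (((if m = (0 : Fin d) then (1:ℝ) else 0) : ℝ) : ℂ) := by
  simp only [e]
  split <;> simp

lemma f_zero_apply (m : Fin d) : f d 0 m = ((1 / Real.sqrt d : ℝ) : ℂ) := by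
  simp [f, Fin.val_zero]

lemma chiP_apply (m : Fin d) :
    chiP d m = (((1 / Real.sqrt (2 + 2 / Real.sqrt d))
      * ((if m = (0 : Fin d) then (1:ℝ) else 0) + 1 / Real.sqrt d) : ℝ) : ℂ) := by
  simp only [chiP, Pi.smul_apply, Pi.add_apply, e_zero_apply, f_zero_apply, smul_eq_mul]
  push_cast
  ring

lemma chiM_apply (m : Fin d) :
    chiM d m = (((1 / Real.sqrt (2 - 2 / Real.sqrt d))
      * ((if m = (0 : Fin d) then (1:ℝ) else 0) - 1 / Real.sqrt d) : ℝ) : ℂ) := by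
  simp only [chiM, Pi.smul_apply, Pi.sub_apply, e_zero_apply, f_zero_apply, smul_eq_mul]
  push_cast
  ring

/-! #### The structure of `Z₀₀` -/

lemma Z00_eq (hd : 2 ≤ d) :
    Z00 d = ((mu2 d : ℝ) : ℂ) • 1 + ((alpha d : ℝ) : ℂ) •
      (Matrix.vecMulVec (e d 0) (star (e d 0)) + Matrix.vecMulVec (f d 0) (star (f d 0))) := by
  ext i j
  simp only [Z00, Matrix.add_apply, Matrix.smul_apply, Matrix.sub_apply,
    Matrix.vecMulVec_apply, Pi.star_apply, chiP_apply, chiM_apply, e_zero_apply, f_zero_apply,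
    RCLike.star_def, Complex.conj_ofReal, smul_eq_mul, Matrix.one_apply]
  rw [show (if i = j then (1:ℂ) else 0) = (((if i = j then (1:ℝ) else 0) : ℝ) : ℂ) from by
    split <;> simp]
  push_cast
  exact_mod_cast master d hd (if i = (0:Fin d) then (1:ℝ) else 0)
    (if j = (0:Fin d) then (1:ℝ) else 0) (if i = j then (1:ℝ) else 0)


/-! #### Inner products -/

lemma sum_if (A B : ℝ) :
    (∑ m : Fin d, (if m = (0:Fin d) then A else B)) = A + ((d:ℝ) - 1) * B := by
  have key : ∀ m : Fin d, (if m = (0:Fin d) then A else B)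
      = B + (if m = (0:Fin d) then A - B else 0) := fun m => by split <;> ring
  rw [Finset.sum_congr rfl (fun m _ => key m), Finset.sum_add_distrib, Finset.sum_const,
    Finset.sum_ite_eq' Finset.univ (0:Fin d)]
  have hd1 : 1 ≤ d := Nat.one_le_iff_ne_zero.mpr (NeZero.ne d)
  simp only [Finset.card_univ, Fintype.card_fin, nsmul_eq_mul, Finset.mem_univ, if_pos]
  ring

lemma star_dot_eq (u v : Fin d → ℂ) (a b : Fin d → ℝ)
    (hu : ∀ m, u m = ((a m : ℝ) : ℂ)) (hv : ∀ m, v m = ((b m : ℝ) : ℂ)) :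
    star u ⬝ᵥ v = ((∑ m, a m * b m : ℝ) : ℂ) := by
  rw [dotProduct]
  push_cast
  apply Finset.sum_congr rfl
  intro m _
  rw [Pi.star_apply, hu, hv, RCLike.star_def, Complex.conj_ofReal]

section Dots

variable (hd : 2 ≤ d)
include hd

lemma dot_mm : star (chiM d) ⬝ᵥ chiM d = 1 := by
  rw [star_dot_eq d (chiM d) (chiM d) _ _ (chiM_apply d) (chiM_apply d)]
  have h1 := one_lt_s d hd
  have h0 := s_pos d hd
  have hm := twoMs_pos d hd
  set s := Real.sqrt d with hs
  set cm := 1 / Real.sqrt (2 - 2 / s) with hcmd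
  have hcm : cm * cm = 1 / (2 - 2 / s) := by
    rw [hcmd, div_mul_div_comm, one_mul, Real.mul_self_sqrt hm.le]
  have key : ∀ m : Fin d, (cm * ((if m = (0:Fin d) then (1:ℝ) else 0) - 1/s))
        * (cm * ((if m = (0:Fin d) then (1:ℝ) else 0) - 1/s))
      = if m = (0:Fin d) then (cm * cm) * ((1 - 1/s) * (1 - 1/s))
        else (cm * cm) * ((1/s) * (1/s)) := fun m => by split <;> ring
  rw [Finset.sum_congr rfl (fun m _ => key m), sum_if, hcm]
  have hd2 : (d : ℝ) = s ^ 2 := by rw [hs, Real.sq_sqrt (Nat.cast_nonneg d)]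
  rw [hd2]
  norm_cast
  have hne0 : s ≠ 0 := h0.ne'
  have hne1 : s - 1 ≠ 0 := by linarith
  have e1 : 1 / (2 - 2 / s) = s / (2 * (s - 1)) := by
    rw [div_eq_div_iff hm.ne' (by positivity)]
    field_simp
  rw [e1]
  field_simp
  ring

lemma dot_pp : star (chiP d) ⬝ᵥ chiP d = 1 := by
  rw [star_dot_eq d (chiP d) (chiP d) _ _ (chiP_apply d) (chiP_apply d)]
  have h1 := one_lt_s d hd
  have h0 := s_pos d hd
  have hp := twoPs_pos d hd
  set s := Real.sqrt d with hs
  set cp := 1 / Real.sqrt (2 + 2 / s) with hcpd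
  have hcp : cp * cp = 1 / (2 + 2 / s) := by
    rw [hcpd, div_mul_div_comm, one_mul, Real.mul_self_sqrt hp.le]
  have key : ∀ m : Fin d, (cp * ((if m = (0:Fin d) then (1:ℝ) else 0) + 1/s))
        * (cp * ((if m = (0:Fin d) then (1:ℝ) else 0) + 1/s))
      = if m = (0:Fin d) then (cp * cp) * ((1 + 1/s) * (1 + 1/s))
        else (cp * cp) * ((1/s) * (1/s)) := fun m => by split <;> ring
  rw [Finset.sum_congr rfl (fun m _ => key m), sum_if, hcp]
  have hd2 : (d : ℝ) = s ^ 2 := by rw [hs, Real.sq_sqrt (Nat.cast_nonneg d)]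
  rw [hd2]
  norm_cast
  have hne0 : s ≠ 0 := h0.ne'
  have hne1' : s + 1 ≠ 0 := by linarith
  have e2 : 1 / (2 + 2 / s) = s / (2 * (s + 1)) := by
    rw [div_eq_div_iff hp.ne' (by positivity)]
    field_simp
  rw [e2]
  field_simp
  ring

lemma dot_pm : star (chiP d) ⬝ᵥ chiM d = 0 := by
  rw [star_dot_eq d (chiP d) (chiM d) _ _ (chiP_apply d) (chiM_apply d)]
  have h0 := s_pos d hd
  set s := Real.sqrt d with hs
  set cp := 1 / Real.sqrt (2 + 2 / s) with hcpd
  set cm := 1 / Real.sqrt (2 - 2 / s) with hcmd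
  have key : ∀ m : Fin d, (cp * ((if m = (0:Fin d) then (1:ℝ) else 0) + 1/s))
        * (cm * ((if m = (0:Fin d) then (1:ℝ) else 0) - 1/s))
      = if m = (0:Fin d) then (cp * cm) * ((1 + 1/s) * (1 - 1/s))
        else -((cp * cm) * ((1/s) * (1/s))) := fun m => by split <;> ring
  rw [Finset.sum_congr rfl (fun m _ => key m), sum_if]
  have hd2 : (d : ℝ) = s ^ 2 := by rw [hs, Real.sq_sqrt (Nat.cast_nonneg d)]
  rw [hd2]
  norm_cast
  have hne0 : s ≠ 0 := h0.ne'
  field_simp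
  ring

lemma dot_mp : star (chiM d) ⬝ᵥ chiP d = 0 := by
  rw [star_dot_eq d (chiM d) (chiP d) _ _ (chiM_apply d) (chiP_apply d)]
  have h0 := s_pos d hd
  set s := Real.sqrt d with hs
  set cp := 1 / Real.sqrt (2 + 2 / s) with hcpd
  set cm := 1 / Real.sqrt (2 - 2 / s) with hcmd
  have key : ∀ m : Fin d, (cm * ((if m = (0:Fin d) then (1:ℝ) else 0) - 1/s))
        * (cp * ((if m = (0:Fin d) then (1:ℝ) else 0) + 1/s))
      = if m = (0:Fin d) then (cp * cm) * ((1 + 1/s) * (1 - 1/s))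
        else -((cp * cm) * ((1/s) * (1/s))) := fun m => by split <;> ring
  rw [Finset.sum_congr rfl (fun m _ => key m), sum_if]
  have hd2 : (d : ℝ) = s ^ 2 := by rw [hs, Real.sq_sqrt (Nat.cast_nonneg d)]
  rw [hd2]
  norm_cast
  have hne0 : s ≠ 0 := h0.ne'
  field_simp
  ring

end Dots


/-! #### Positive semidefiniteness and the structure of `Z_kl` -/

section Main

variable (hd : 2 ≤ d)
include hd

lemma Z00_posSemidef : (Z00 d).PosSemidef := by
  unfold Z00
  set Pp := Matrix.vecMulVec (chiP d) (star (chiP d)) with hPp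
  set Pm := Matrix.vecMulVec (chiM d) (star (chiM d)) with hPm
  have hPmH : Pmᴴ = Pm := vecMulVec_star_hermitian _
  have hPpH : Ppᴴ = Pp := vecMulVec_star_hermitian _
  have hmm : Pm * Pm = Pm := by
    rw [hPm, vecMulVec_mul_vecMulVec, dot_mm d hd, one_smul]
  have hpp : Pp * Pp = Pp := by
    rw [hPp, vecMulVec_mul_vecMulVec, dot_pp d hd, one_smul]
  have hpm : Pp * Pm = 0 := by
    rw [hPp, hPm, vecMulVec_mul_vecMulVec, dot_pm d hd, zero_smul]
  have hmp : Pm * Pp = 0 := by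
    rw [hPp, hPm, vecMulVec_mul_vecMulVec, dot_mp d hd, zero_smul]
  have hPmPSD : Pm.PosSemidef := by
    rw [show Pm = Pmᴴ * Pm from by rw [hPmH, hmm]]
    exact Matrix.posSemidef_conjTranspose_mul_self _
  have hQPSD : ((1 : Matrix (Fin d) (Fin d) ℂ) - Pp - Pm).PosSemidef := by
    have hQH : ((1 : Matrix (Fin d) (Fin d) ℂ) - Pp - Pm)ᴴ = 1 - Pp - Pm := by
      simp [Matrix.conjTranspose_sub, hPpH, hPmH]
    have hQQ : ((1 : Matrix (Fin d) (Fin d) ℂ) - Pp - Pm) * (1 - Pp - Pm) = 1 - Pp - Pm := by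
      have expand : ((1 : Matrix (Fin d) (Fin d) ℂ) - Pp - Pm) * (1 - Pp - Pm)
          = 1 - Pp - Pm - Pp + Pp*Pp + Pp*Pm - Pm + Pm*Pp + Pm*Pm := by noncomm_ring
      rw [expand, hpp, hpm, hmp, hmm]
      abel
    rw [show (1 : Matrix (Fin d) (Fin d) ℂ) - Pp - Pm
        = ((1 : Matrix (Fin d) (Fin d) ℂ) - Pp - Pm)ᴴ * (1 - Pp - Pm) from by rw [hQH, hQQ]]
    exact Matrix.posSemidef_conjTranspose_mul_self _
  exact (smul_posSemidef (mu1_nonneg d hd) hPmPSD).add (smul_posSemidef (mu2_nonneg d hd) hQPSD)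

omit hd

lemma Zkl_conj (k l : Fin d) :
    Zkl d k l = (U d k * V d l) * Z00 d * (U d k * V d l)ᴴ := by
  unfold Zkl
  rw [Matrix.conjTranspose_mul, ← Matrix.mul_assoc]

lemma W_mul_conjTranspose (k l : Fin d) : (U d k * V d l) * (U d k * V d l)ᴴ = 1 := by
  rw [Matrix.conjTranspose_mul]
  calc (U d k * V d l) * ((V d l)ᴴ * (U d k)ᴴ)
      = U d k * (V d l * (V d l)ᴴ) * (U d k)ᴴ := by simp only [Matrix.mul_assoc]
    _ = 1 := by rw [V_mul_conjTranspose, Matrix.mul_one, U_mul_conjTranspose]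

lemma vecMulVec_phase (c : ℂ) (hc : c * star c = 1) (u : Fin d → ℂ) :
    Matrix.vecMulVec (c • u) (star (c • u)) = Matrix.vecMulVec u (star u) := by
  ext i j
  simp only [Matrix.vecMulVec_apply, Pi.star_apply, Pi.smul_apply, smul_eq_mul, star_mul']
  calc c * u i * (star c * star (u j)) = (c * star c) * (u i * star (u j)) := by ring
    _ = u i * star (u j) := by rw [hc, one_mul]

include hd

lemma Zkl_eq (k l : Fin d) : Zkl d k l = ((mu2 d : ℝ) : ℂ) • 1 + ((alpha d : ℝ) : ℂ) •
    (Matrix.vecMulVec (e d k) (star (e d k)) + Matrix.vecMulVec (f d l) (star (f d l))) := by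
  rw [Zkl_conj, Z00_eq d hd]
  simp only [Matrix.mul_add, Matrix.add_mul, Matrix.mul_smul, Matrix.smul_mul, Matrix.mul_one]
  rw [W_mul_conjTranspose, vecMulVec_conj_transform, vecMulVec_conj_transform,
    UV_mulVec_e, UV_mulVec_f,
    vecMulVec_phase d _ (by rw [RCLike.star_def]; exact zeta_pow_mul_conj_self d _) (f d l)]

lemma Zkl_posSemidef (k l : Fin d) : (Zkl d k l).PosSemidef := by
  rw [Zkl_conj]
  exact (Z00_posSemidef d hd).mul_mul_conjTranspose_same _

omit hd

lemma trace_E (k : Fin d) : (Matrix.vecMulVec (e d k) (star (e d k))).trace = 1 := by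
  rw [Matrix.trace, Finset.sum_eq_single k]
  · simp [Matrix.diag, Matrix.vecMulVec_apply, e]
  · intro b _ hb; simp [Matrix.diag, Matrix.vecMulVec_apply, e, hb]
  · intro h; exact absurd (Finset.mem_univ _) h

lemma trace_F (l : Fin d) : (Matrix.vecMulVec (f d l) (star (f d l))).trace = 1 := by
  have key : ∀ m : Fin d, (Matrix.vecMulVec (f d l) (star (f d l))).diag m = ((1/(d:ℝ) : ℝ) : ℂ) := by
    intro m
    show f d l m * star (f d l m) = _
    simp only [f, star_mul', RCLike.star_def, Complex.conj_ofReal]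
    rw [show ((1/Real.sqrt d : ℝ):ℂ) * zeta d ^ (l.val*m.val)
        * (((1/Real.sqrt d : ℝ):ℂ) * (starRingEnd ℂ) (zeta d ^ (l.val*m.val)))
        = (zeta d ^ (l.val*m.val) * (starRingEnd ℂ) (zeta d ^ (l.val*m.val)))
          * (((1/Real.sqrt d:ℝ):ℂ) * ((1/Real.sqrt d:ℝ):ℂ)) from by ring,
      zeta_pow_mul_conj_self, one_mul]
    norm_cast
    rw [div_mul_div_comm, one_mul, Real.mul_self_sqrt (Nat.cast_nonneg d)]
  rw [Matrix.trace, Finset.sum_congr rfl (fun m _ => key m), Finset.sum_const]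
  have hd0 : (d:ℝ) ≠ 0 := Nat.cast_ne_zero.mpr (NeZero.ne d)
  simp only [Finset.card_univ, Fintype.card_fin, nsmul_eq_mul]
  push_cast
  field_simp
  exact div_self (Nat.cast_ne_zero.mpr (NeZero.ne d))

include hd

lemma Zkl_trace (k l : Fin d) : (Zkl d k l).trace = 1 := by
  rw [Zkl_eq d hd, Matrix.trace_add, Matrix.trace_smul, Matrix.trace_smul, Matrix.trace_add,
    trace_E, trace_F, Matrix.trace_one]
  simp only [smul_eq_mul, Fintype.card_fin]
  have h : ((mu2 d * d + 2 * alpha d : ℝ) : ℂ) = 1 := by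
    rw [trace_id d hd]; norm_num
  push_cast at h ⊢
  linear_combination h

end Main

end Stmt17Aux

/-- the mutually-unbiased-bases construction of steering-map operators
for `n = 2` settings and `m = d` outcomes: each `Z_{kl}` is positive semidefinite with
unit trace, and the steering-map relations `Z_{kl} = Z_{kt} + Z_{sl} − Z_{st}` hold. -/
theorem stmt17 (d : ℕ) [NeZero d] (hd : 2 ≤ d) :
    (∀ k l : Fin d, (Stmt17.Zkl d k l).PosSemidef ∧ (Stmt17.Zkl d k l).trace = 1)
    ∧ (∀ k l s t : Fin d,
        Stmt17.Zkl d k l = Stmt17.Zkl d k t + Stmt17.Zkl d s l - Stmt17.Zkl d s t) := by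
  constructor
  · intro k l
    exact ⟨Stmt17Aux.Zkl_posSemidef d hd k l, Stmt17Aux.Zkl_trace d hd k l⟩
  · intro k l s t
    rw [Stmt17Aux.Zkl_eq d hd k l, Stmt17Aux.Zkl_eq d hd k t, Stmt17Aux.Zkl_eq d hd s l,
      Stmt17Aux.Zkl_eq d hd s t]
    simp only [smul_add]
    abel
end

section
/- Let d_A, d_B ≥ 1 and let Σ be a positive semidefinite (d_A·d_B)×(d_A·d_B) complex matrix on ℂ^{d_A} ⊗ ℂ^{d_B} with tr(Σ) = 1. Let {G^A_k}_{k∈K} and {G^B_l}_{l∈L} be finite families of Hermitian matrices of sizes d_A×d_A and d_B×d_B respectively, each orthonormal with respect to the Hilbert–Schmidt inner product (tr(G^A_k·G^A_{k'}) = δ_{kk'} and tr(G^B_l·G^B_{l'}) = δ_{ll'}), and suppose the identity matrix I_{d_A} lies in the real linear span of {G^A_k} and I_{d_B} lies in the real linear span of {G^B_l}. Then the largest singular value of the real |K|×|L| matrix C with entries C_{kl} = tr((G^A_k ⊗ G^B_l)·Σ) satisfies σ_max(C) ≥ 1/√(d_A·d_B). -/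
open Matrix Finset
open scoped Kronecker ComplexOrder

/-- Quadratic form bound by max eigenvalue, real symmetric case. -/
lemma quad_form_le {n : Type} [Fintype n] [DecidableEq n]
    (A : Matrix n n ℝ) (hA : A.IsHermitian) (μ : ℝ)
    (hμ : ∀ i, hA.eigenvalues i ≤ μ) (v : n → ℝ) :
    v ⬝ᵥ (A *ᵥ v) ≤ μ * (v ⬝ᵥ v) := by
  set U : Matrix n n ℝ := (hA.eigenvectorUnitary : Matrix n n ℝ) with hUdef
  have hUU : U * star U = 1 := (Matrix.mem_unitaryGroup_iff).mp hA.eigenvectorUnitary.2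
  set w : n → ℝ := star U *ᵥ v with hw
  have hvw : v ⬝ᵥ (U *ᵥ (star U *ᵥ v)) = w ⬝ᵥ w := by
    rw [Matrix.dotProduct_mulVec, hw]
    congr 1
    rw [Matrix.star_eq_conjTranspose, Matrix.conjTranspose_eq_transpose_of_trivial,
      Matrix.mulVec_transpose]
  have hnorm : w ⬝ᵥ w = v ⬝ᵥ v := by
    rw [← hvw, Matrix.mulVec_mulVec, hUU, Matrix.one_mulVec]
  have hquad : v ⬝ᵥ (A *ᵥ v) = ∑ i, hA.eigenvalues i * (w i)^2 := by
    conv_lhs => rw [hA.spectral_theorem, Unitary.conjStarAlgAut_apply]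
    rw [Matrix.mul_assoc, ← Matrix.mulVec_mulVec, ← Matrix.mulVec_mulVec, ← hw,
      Matrix.dotProduct_mulVec]
    have hvU : v ᵥ* U = w := by
      rw [hw, Matrix.star_eq_conjTranspose, Matrix.conjTranspose_eq_transpose_of_trivial,
        Matrix.mulVec_transpose]
    rw [hvU]
    simp [dotProduct, Matrix.mulVec_diagonal, Function.comp]
    exact Finset.sum_congr rfl fun i _ => by ring
  rw [hquad, ← hnorm]
  calc ∑ i, hA.eigenvalues i * (w i)^2 ≤ ∑ i, μ * (w i)^2 := by
        apply Finset.sum_le_sum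
        intro i _
        exact mul_le_mul_of_nonneg_right (hμ i) (sq_nonneg _)
    _ = μ * (w ⬝ᵥ w) := by
        rw [dotProduct, Finset.mul_sum]
        exact Finset.sum_congr rfl fun i _ => by ring
        
/-- if `Σ` is a state on `ℂ^{d_A} ⊗ ℂ^{d_B}` and `{G^A_k}`, `{G^B_l}`
are Hilbert–Schmidt orthonormal Hermitian families whose real spans contain the
respective identities, then the largest singular value of the correlation matrix
`C_{kl} = tr((G^A_k ⊗ G^B_l)·Σ)` is at least `1/√(d_A·d_B)`. -/
theorem stmt18 (dA dB : ℕ) (hdA : 1 ≤ dA) (hdB : 1 ≤ dB)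
    (K L : Type) [Fintype K] [DecidableEq K] [Nonempty K]
    [Fintype L] [DecidableEq L] [Nonempty L]
    (S : Matrix (Fin dA × Fin dB) (Fin dA × Fin dB) ℂ)
    (hS : S.PosSemidef) (htrS : S.trace = 1)
    (GA : K → Matrix (Fin dA) (Fin dA) ℂ)
    (hGAherm : ∀ k, (GA k).IsHermitian)
    (hGAortho : ∀ k k', (GA k * GA k').trace = if k = k' then 1 else 0)
    (hIA : ∃ c : K → ℝ, (1 : Matrix (Fin dA) (Fin dA) ℂ) = ∑ k, (c k : ℂ) • GA k)
    (GB : L → Matrix (Fin dB) (Fin dB) ℂ)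
    (hGBherm : ∀ l, (GB l).IsHermitian)
    (hGBortho : ∀ l l', (GB l * GB l').trace = if l = l' then 1 else 0)
    (hIB : ∃ c : L → ℝ, (1 : Matrix (Fin dB) (Fin dB) ℂ) = ∑ l, (c l : ℂ) • GB l)
    (C : Matrix K L ℝ)
    (hC : ∀ k l, (C k l : ℂ) = ((GA k ⊗ₖ GB l) * S).trace) :
    1 / Real.sqrt ((dA : ℝ) * dB)
      ≤ Finset.univ.sup' Finset.univ_nonempty
          (fun l : L =>
            Real.sqrt ((Matrix.isHermitian_conjTranspose_mul_self C).eigenvalues l)) := by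
  obtain ⟨a, ha⟩ := hIA
  obtain ⟨b, hb⟩ := hIB
  -- norms of a and b
  have hnA : ∑ k, (a k)^2 = (dA : ℝ) := by
    have h1 : ((1 : Matrix (Fin dA) (Fin dA) ℂ) * 1).trace = (dA : ℂ) := by
      simp [Matrix.trace_one]
    rw [ha, Finset.sum_mul_sum] at h1
    simp only [Matrix.trace_sum, smul_mul_assoc, mul_smul_comm, Matrix.trace_smul,
      hGAortho, smul_eq_mul, mul_ite, mul_one, mul_zero, Finset.sum_ite_eq',
      Finset.mem_univ, if_true] at h1
    have : ((∑ k, (a k)^2 : ℝ) : ℂ) = (dA : ℂ) := by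
      rw [← h1]
      push_cast
      refine Finset.sum_congr rfl fun k _ => ?_
      simp only [Finset.sum_ite_eq, Finset.mem_univ, if_true]
      ring
    exact_mod_cast this
  have hnB : ∑ l, (b l)^2 = (dB : ℝ) := by
    have h1 : ((1 : Matrix (Fin dB) (Fin dB) ℂ) * 1).trace = (dB : ℂ) := by
      simp [Matrix.trace_one]
    rw [hb, Finset.sum_mul_sum] at h1
    simp only [Matrix.trace_sum, smul_mul_assoc, mul_smul_comm, Matrix.trace_smul,
      hGBortho, smul_eq_mul, mul_ite, mul_one, mul_zero, Finset.sum_ite_eq',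
      Finset.mem_univ, if_true] at h1
    have : ((∑ l, (b l)^2 : ℝ) : ℂ) = (dB : ℂ) := by
      rw [← h1]
      push_cast
      refine Finset.sum_congr rfl fun l _ => ?_
      simp only [Finset.sum_ite_eq, Finset.mem_univ, if_true]
      ring
    exact_mod_cast this
  -- key trace identity
  have hkron : (1 : Matrix (Fin dA × Fin dB) (Fin dA × Fin dB) ℂ)
      = ∑ k, ∑ l, ((a k * b l : ℝ) : ℂ) • (GA k ⊗ₖ GB l) := by
    rw [← Matrix.one_kronecker_one, ha, hb]
    ext ⟨i, j⟩ ⟨i', j'⟩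
    simp [Matrix.kroneckerMap_apply, Matrix.sum_apply, Finset.sum_mul_sum,
      Finset.mul_sum, Finset.sum_mul]
    rw [Finset.sum_comm]
    refine Finset.sum_congr rfl fun k _ => Finset.sum_congr rfl fun l _ => by push_cast; ring
  have hone : ∑ k, ∑ l, a k * b l * C k l = 1 := by
    have h1 : ((1 : Matrix (Fin dA × Fin dB) (Fin dA × Fin dB) ℂ) * S).trace = 1 := by
      rw [Matrix.one_mul, htrS]
    rw [hkron, Finset.sum_mul, Matrix.trace_sum] at h1
    simp only [Finset.sum_mul, Matrix.trace_sum, smul_mul_assoc, Matrix.trace_smul,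
      smul_eq_mul] at h1
    have : ((∑ k, ∑ l, a k * b l * C k l : ℝ) : ℂ) = 1 := by
      push_cast
      rw [← h1]
      refine Finset.sum_congr rfl fun k _ => Finset.sum_congr rfl fun l _ => ?_
      rw [← hC k l]
      push_cast
      ring
    exact_mod_cast this
  -- setup eigenvalues
  set hM := Matrix.isHermitian_conjTranspose_mul_self C with hMdef
  obtain ⟨l0, _, hl0⟩ := Finset.exists_mem_eq_sup' (Finset.univ_nonempty (α := L)) hM.eigenvalues
  have hmax : ∀ l, hM.eigenvalues l ≤ hM.eigenvalues l0 := by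
    intro l
    rw [← hl0]
    exact Finset.le_sup' _ (Finset.mem_univ l)
  -- quadratic form bound
  have hquad : (C *ᵥ b) ⬝ᵥ (C *ᵥ b) ≤ hM.eigenvalues l0 * (dB : ℝ) := by
    have h1 : b ⬝ᵥ ((Cᵀ * C) *ᵥ b) ≤ hM.eigenvalues l0 * (b ⬝ᵥ b) :=
      quad_form_le _ hM _ hmax b
    have h2 : b ⬝ᵥ ((Cᵀ * C) *ᵥ b) = (C *ᵥ b) ⬝ᵥ (C *ᵥ b) := by
      rw [← Matrix.mulVec_mulVec, Matrix.dotProduct_mulVec, Matrix.vecMul_transpose]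
    have h3 : b ⬝ᵥ b = (dB : ℝ) := by
      rw [dotProduct, ← hnB]
      exact Finset.sum_congr rfl fun l _ => by ring
    rw [h2, h3] at h1
    exact h1
  -- Cauchy-Schwarz
  have hcs : (1 : ℝ) ≤ (dA : ℝ) * ((C *ᵥ b) ⬝ᵥ (C *ᵥ b)) := by
    have h1 : a ⬝ᵥ (C *ᵥ b) = 1 := by
      rw [dotProduct, ← hone]
      refine Finset.sum_congr rfl fun k _ => ?_
      rw [Matrix.mulVec, dotProduct, Finset.mul_sum]
      exact Finset.sum_congr rfl fun l _ => by ring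
    have h2 := Finset.sum_mul_sq_le_sq_mul_sq Finset.univ a (C *ᵥ b)
    rw [show (∑ k, a k * (C *ᵥ b) k) = a ⬝ᵥ (C *ᵥ b) from rfl, h1] at h2
    calc (1 : ℝ) = 1 ^ 2 := by ring
      _ ≤ (∑ k, (a k)^2) * ∑ k, ((C *ᵥ b) k)^2 := h2
      _ = (dA : ℝ) * ((C *ᵥ b) ⬝ᵥ (C *ᵥ b)) := by
          rw [hnA, dotProduct]
          congr 1
          exact Finset.sum_congr rfl fun k _ => by ring
  have hdApos : (0 : ℝ) < dA := by exact_mod_cast hdA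
  have hdBpos : (0 : ℝ) < dB := by exact_mod_cast hdB
  have hlam : 1 / ((dA : ℝ) * dB) ≤ hM.eigenvalues l0 := by
    rw [div_le_iff₀ (by positivity)]
    calc (1 : ℝ) ≤ (dA : ℝ) * ((C *ᵥ b) ⬝ᵥ (C *ᵥ b)) := hcs
      _ ≤ (dA : ℝ) * (hM.eigenvalues l0 * (dB : ℝ)) :=
          mul_le_mul_of_nonneg_left hquad (le_of_lt hdApos)
      _ = hM.eigenvalues l0 * ((dA : ℝ) * dB) := by ring
  calc 1 / Real.sqrt ((dA : ℝ) * dB) = Real.sqrt (1 / ((dA : ℝ) * dB)) := by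
        rw [one_div, one_div, Real.sqrt_inv]
      _ ≤ Real.sqrt (hM.eigenvalues l0) := Real.sqrt_le_sqrt hlam
      _ ≤ _ := Finset.le_sup' (fun l => Real.sqrt (hM.eigenvalues l)) (Finset.mem_univ l0)
end
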